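/- arXiv:2510.15773 — 13 statements merged into one kernel-verified Lean document; each statement's English description precedes it below -/
import Mathlib

section
/- Let MSE(p) = β σ² / (ρ τ p β |Φ|² + σ²) denote the per-component channel-estimation mean-square error of the Rydberg atomic receiver under Rayleigh fading (Rician factor δ = 0), and let MSE_RF(p) = β σ_RF² / (ρ_RF τ p β + σ_RF²) denote that of the conventional RF receiver. Then lim_{p → ∞} MSE_RF(p) / MSE(p) = κ, where κ = (ρ |Φ|² / σ²) / (ρ_RF / σ_RF²); i.e., in the high-SNR regime the channel estimation of the atomic receiver is enhanced over the RF receiver exactly by the normalized-noise ratio κ (equivalently, by 10·lg κ dB). -/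
/-! After cancelling `β`, the ratio of the two MSEs is `σ_RF²/σ²` times a quotient of two affine
functions of `p`, which tends to the quotient of their slopes. -/

open Filter Topology

theorem tendsto_linear_add_div_linear_add_atTop {a b c d : ℝ} (hc : c ≠ 0) :
    Tendsto (fun p => (a * p + b) / (c * p + d)) atTop (𝓝 (a / c)) := by
  have hinv : Tendsto (fun p : ℝ => p⁻¹) atTop (𝓝 0) := tendsto_inv_atTop_zero
  have hlim : Tendsto (fun p => (a + b * p⁻¹) / (c + d * p⁻¹)) atTop
      (𝓝 ((a + b * 0) / (c + d * 0))) :=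
    (tendsto_const_nhds.add (hinv.const_mul b)).div
      (tendsto_const_nhds.add (hinv.const_mul d)) (by simpa using hc)
  rw [mul_zero, mul_zero, add_zero, add_zero] at hlim
  refine hlim.congr' ?_
  filter_upwards [eventually_ne_atTop 0] with p hp
  rw [← mul_div_mul_right _ _ hp, add_mul, add_mul, inv_mul_cancel_right₀ hp,
    inv_mul_cancel_right₀ hp]

theorem div_div_div_cancel_left_mul {K : Type*} [Field K] {β s t X Y : K} (hβ : β ≠ 0) :
    (β * s / X) / (β * t / Y) = s / t * (Y / X) := by
  rw [div_div_div_eq, mul_assoc β, mul_left_comm X, mul_div_mul_left _ _ hβ, mul_comm X,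
    mul_div_mul_comm]

theorem stmt_1_general
    (β τ ρ Φ2 σ2 ρRF σRF2 : ℝ)
    (hβ : 0 < β) (hτ : 0 < τ)
    (hρRF : 0 < ρRF)
    (MSE MSE_RF : ℝ → ℝ) (κ : ℝ)
    (hMSE : ∀ p, MSE p = β * σ2 / (ρ * τ * p * β * Φ2 + σ2))
    (hMSERF : ∀ p, MSE_RF p = β * σRF2 / (ρRF * τ * p * β + σRF2))
    (hκ : κ = (ρ * Φ2 / σ2) / (ρRF / σRF2)) :
    Tendsto (fun p => MSE_RF p / MSE p) atTop (nhds κ) := by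
  have hratio : ∀ p, MSE_RF p / MSE p =
      σRF2 / σ2 * ((ρ * τ * β * Φ2 * p + σ2) / (ρRF * τ * β * p + σRF2)) := fun p => by
    rw [hMSE, hMSERF, div_div_div_cancel_left_mul hβ.ne']
    ring
  have hκ' : κ = σRF2 / σ2 * (ρ * τ * β * Φ2 / (ρRF * τ * β)) := by
    rw [hκ]
    field_simp
  rw [funext hratio, hκ']
  exact (tendsto_linear_add_div_linear_add_atTop (by positivity)).const_mul _

/-- In the high-SNR regime `p → ∞`, the ratio of the RF receiver's
channel-estimation MSE to the Rydberg atomic receiver's MSE tends to the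
normalized-noise ratio `κ = (ρ|Φ|²/σ²)/(ρ_RF/σ_RF²)`. -/
theorem stmt_1
    (β τ ρ Φ2 σ2 ρRF σRF2 : ℝ)
    (hβ : 0 < β) (hτ : 0 < τ) (hρ : 0 < ρ) (hΦ2 : 0 < Φ2) (hσ2 : 0 < σ2)
    (hρRF : 0 < ρRF) (hσRF2 : 0 < σRF2)
    (MSE MSE_RF : ℝ → ℝ) (κ : ℝ)
    (hMSE : ∀ p, MSE p = β * σ2 / (ρ * τ * p * β * Φ2 + σ2))
    (hMSERF : ∀ p, MSE_RF p = β * σRF2 / (ρRF * τ * p * β + σRF2))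
    (hκ : κ = (ρ * Φ2 / σ2) / (ρRF / σRF2)) :
    Tendsto (fun p => MSE_RF p / MSE p) atTop (nhds κ) :=
  stmt_1_general β τ ρ Φ2 σ2 ρRF σRF2 hβ hτ hρRF MSE MSE_RF κ hMSE hMSERF hκ
end

section
/- Under Rayleigh fading (δ_k = 0 for all k), the Theorem-1 MRC SINR expression SINR_k^MRC = M p^d_k α_k (μ_k + δ_k)² / ( Σ_{k'=1}^K p^d_{k'} (δ_k α_{k'} + μ_k β_{k'}) + Σ_{k'≠k} p^d_{k'} (|h̄_k^H h̄_{k'}|²/M) δ_k δ_{k'} α_{k'} + (σ²/(ρ|Φ|²))(μ_k + δ_k) ) factorizes exactly as SINR_k^MRC = [ M p^d_k β_k / ( Σ_{k'=1}^K p^d_{k'} β_{k'} + σ²/(ρ|Φ|²) ) ] · (1 − NMSE_k), where NMSE_k = σ² / (ρ τ p^p_k β_k |Φ|² + σ²); i.e., imperfect CSI multiplies the perfect-CSI MRC baseline by the factor (1 − NMSE_k). -/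
/-!
With `δ = 0` the line-of-sight interference vanishes, `α = β`, and every remaining term of the
denominator carries a factor `μ_k`. Cancelling it against `μ_k²` leaves the perfect-CSI SINR
times `μ_k`, and `μ_k = 1 − NMSE_k`.
-/

open Finset

theorem one_sub_div_add_self {F : Type*} [Field F] {x σ : F} (h : x + σ ≠ 0) :
    1 - σ / (x + σ) = x / (x + σ) := by
  rw [one_sub_div h, add_sub_cancel_right]

/-- Holds without side conditions: both sides vanish when `μ = 0` or `S + c = 0`. -/
theorem mul_sq_div_mul_add_mul {F : Type*} [Field F] (a S c μ : F) :
    a * μ ^ 2 / (μ * S + c * μ) = a / (S + c) * μ := by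
  rcases eq_or_ne μ 0 with rfl | hμ
  · simp
  rw [show μ * S + c * μ = (S + c) * μ by ring, sq, ← mul_assoc, mul_div_mul_right _ _ hμ,
    div_mul_eq_mul_div]

theorem stmt_2_general
    (K M : ℕ)
    (β δ α μ pd pp : Fin K → ℝ) (hbar : Fin K → Fin M → ℂ)
    (ρ Φ2 σ2 τ : ℝ)
    (hβ : ∀ k, 0 < β k) (hpp : ∀ k, 0 < pp k)
    (hρ : 0 < ρ) (hΦ2 : 0 < Φ2) (hσ2 : 0 < σ2) (hτ : 0 < τ)
    (hδ : ∀ k, δ k = 0)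
    (hα : ∀ k, α k = β k / (δ k + 1))
    (hμ : ∀ k, μ k = ρ * τ * pp k * α k * Φ2 / (ρ * τ * pp k * α k * Φ2 + σ2))
    (k : Fin K) :
    M * pd k * α k * (μ k + δ k) ^ 2 /
      ( (∑ k', pd k' * (δ k * α k' + μ k * β k'))
        + (∑ k' ∈ univ.erase k, pd k' *
            (‖∑ m, (starRingEnd ℂ) (hbar k m) * hbar k' m‖ ^ 2 / M)
            * δ k * δ k' * α k')
        + (σ2 / (ρ * Φ2)) * (μ k + δ k) )
    = (M * pd k * β k / ((∑ k', pd k' * β k') + σ2 / (ρ * Φ2)))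
        * (1 - σ2 / (ρ * τ * pp k * β k * Φ2 + σ2)) := by
  have hαβ : ∀ j, α j = β j := fun j => by rw [hα, hδ, zero_add, div_one]
  have hμ_eq : μ k = 1 - σ2 / (ρ * τ * pp k * β k * Φ2 + σ2) := by
    have := hβ k; have := hpp k
    rw [hμ, hαβ, one_sub_div_add_self (by positivity)]
  have hLoS : ∑ k' ∈ univ.erase k, pd k' *
      (‖∑ m, (starRingEnd ℂ) (hbar k m) * hbar k' m‖ ^ 2 / M) * δ k * δ k' * α k' = 0 :=
    sum_eq_zero fun k' _ => by rw [hδ, mul_zero, zero_mul, zero_mul]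
  have hNLoS : ∑ k', pd k' * (δ k * α k' + μ k * β k') = μ k * ∑ k', pd k' * β k' := by
    rw [mul_sum]
    exact sum_congr rfl fun k' _ => by rw [hδ]; ring
  rw [hLoS, hNLoS, hδ, add_zero, add_zero, hαβ, ← hμ_eq]
  exact mul_sq_div_mul_add_mul _ _ _ _

/-- Under Rayleigh fading (`δ_k = 0` for all `k`), the Theorem-1 MRC
SINR factorizes as the perfect-CSI MRC baseline times `(1 − NMSE_k)`. -/
theorem stmt_2
    (K M : ℕ) (hK : 1 ≤ K) (hM : 1 ≤ M)
    (β δ α μ pd pp : Fin K → ℝ) (hbar : Fin K → Fin M → ℂ)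
    (ρ Φ2 σ2 τ : ℝ)
    (hβ : ∀ k, 0 < β k) (hpd : ∀ k, 0 < pd k) (hpp : ∀ k, 0 < pp k)
    (hρ : 0 < ρ) (hΦ2 : 0 < Φ2) (hσ2 : 0 < σ2) (hτ : 0 < τ)
    (hδ : ∀ k, δ k = 0)
    (hα : ∀ k, α k = β k / (δ k + 1))
    (hμ : ∀ k, μ k = ρ * τ * pp k * α k * Φ2 / (ρ * τ * pp k * α k * Φ2 + σ2))
    (k : Fin K) :
    M * pd k * α k * (μ k + δ k) ^ 2 /
      ( (∑ k', pd k' * (δ k * α k' + μ k * β k'))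
        + (∑ k' ∈ univ.erase k, pd k' *
            (‖∑ m, (starRingEnd ℂ) (hbar k m) * hbar k' m‖ ^ 2 / M)
            * δ k * δ k' * α k')
        + (σ2 / (ρ * Φ2)) * (μ k + δ k) )
    = (M * pd k * β k / ((∑ k', pd k' * β k') + σ2 / (ρ * Φ2)))
        * (1 - σ2 / (ρ * τ * pp k * β k * Φ2 + σ2)) :=
  stmt_2_general K M β δ α μ pd pp hbar ρ Φ2 σ2 τ hβ hpp hρ hΦ2 hσ2 hτ hδ hα hμ k
end

section
/- Under Rayleigh fading (δ_k = 0 for all k, so the LoS matrix vanishes and the matrix Ψ + H̄^H H̄ / M reduces to the diagonal matrix Ψ = diag(μ_1 β_1, …, μ_K β_K)), the Theorem-2 ZF SINR expression SINR_k^ZF = (M−K) p^d_k / ( ( Σ_{k'=1}^K p^d_{k'} β_{k'}(1 − μ_{k'}) + σ²/(ρ|Φ|²) ) · [Ψ^{-1}]_{kk} ) factorizes exactly as SINR_k^ZF = [ (M−K) p^d_k β_k / (σ²/(ρ|Φ|²)) ] · (1 − NMSE_k) · 1/(1 + Δ_RI), where NMSE_k = σ²/(ρ τ p^p_k β_k |Φ|²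 + σ²) and Δ_RI = Σ_{k'=1}^K p^d_{k'} β_{k'} / ( τ p^p_{k'} β_{k'} + σ²/(ρ|Φ|²) ) is the residual-interference factor. -/
open Finset Matrix

/-!
With `A_k = ρ τ p^p_k β_k |Φ|²` and `s = σ²/(ρ|Φ|²)`, one has `1 − μ_k = σ²/(A_k + σ²)`, and dividing
numerator and denominator by `ρ|Φ|²` turns this into `s / (τ p^p_k β_k + s)`. Hence the residual
interference `Σ p^d β (1 − μ)` equals `s · Δ_RI`, the denominator of the SINR becomes
`s (1 + Δ_RI) / (μ_k β_k)`, and the factorization is a rearrangement.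
-/

theorem div_mul_add_eq_div_div_add {F : Type*} [Field F] {c x σ : F} (hc : c ≠ 0) :
    σ / (c * x + σ) = σ / c / (x + σ / c) := by
  rw [← div_div_div_cancel_right₀ hc σ, add_div, mul_div_cancel_left₀ _ hc]

theorem Matrix.inv_diagonal_of_ne_zero {n F : Type*} [Fintype n] [DecidableEq n] [Field F]
    {d : n → F} (hd : ∀ i, d i ≠ 0) : (diagonal d)⁻¹ = diagonal d⁻¹ := by
  refine inv_eq_right_inv ?_
  rw [diagonal_mul_diagonal, ← diagonal_one]
  exact congrArg diagonal (funext fun i => mul_inv_cancel₀ (hd i))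

theorem stmt_3_general
    (K M : ℕ)
    (β μ pd pp : Fin K → ℝ)
    (ρ Φ2 σ2 τ : ℝ)
    (hβ : ∀ k, 0 < β k) (hpp : ∀ k, 0 < pp k)
    (hρ : 0 < ρ) (hΦ2 : 0 < Φ2) (hσ2 : 0 < σ2) (hτ : 0 < τ)
    (hμ : ∀ k, μ k = ρ * τ * pp k * β k * Φ2 / (ρ * τ * pp k * β k * Φ2 + σ2))
    (Ψ : Matrix (Fin K) (Fin K) ℝ)
    (hΨ : Ψ = Matrix.diagonal (fun k => μ k * β k))
    (ΔRI : ℝ)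
    (hΔRI : ΔRI = ∑ k', pd k' * β k' / (τ * pp k' * β k' + σ2 / (ρ * Φ2)))
    (k : Fin K) :
    ((M : ℝ) - K) * pd k /
      ( ((∑ k', pd k' * β k' * (1 - μ k')) + σ2 / (ρ * Φ2)) * (Ψ⁻¹ k k) )
    = (((M : ℝ) - K) * pd k * β k / (σ2 / (ρ * Φ2)))
        * (1 - σ2 / (ρ * τ * pp k * β k * Φ2 + σ2))
        * (1 / (1 + ΔRI)) := by
  have hρΦ2 : ρ * Φ2 ≠ 0 := by positivity
  have hsignal (j : Fin K) : 0 < ρ * τ * pp j * β j * Φ2 := by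
    have := hpp j; have := hβ j; positivity
  have hΨ_diag (j : Fin K) : μ j * β j ≠ 0 := by
    have := hsignal j; have := hβ j; rw [hμ j]; positivity
  have hNMSE (j : Fin K) : 1 - μ j = σ2 / (ρ * τ * pp j * β j * Φ2 + σ2) := by
    have := hsignal j
    rw [hμ j, one_sub_div (by positivity), add_sub_cancel_left]
  have hresidual : ∑ k', pd k' * β k' * (1 - μ k') = σ2 / (ρ * Φ2) * ΔRI := by
    rw [hΔRI, mul_sum]
    refine sum_congr rfl fun j _ => ?_
    rw [hNMSE j, show ρ * τ * pp j * β j * Φ2 = ρ * Φ2 * (τ * pp j * β j) by ring,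
      div_mul_add_eq_div_div_add hρΦ2]
    ring
  rw [hΨ, inv_diagonal_of_ne_zero hΨ_diag, diagonal_apply_eq, Pi.inv_apply, hresidual,
    ← mul_add_one, ← hNMSE k]
  simp only [div_eq_mul_inv, mul_inv, inv_inv]
  ring

/-- Under Rayleigh fading, the Theorem-2 ZF SINR (with the matrix
`Ψ + H̄ᴴH̄/M` reduced to the diagonal matrix `Ψ = diag(μ_k β_k)`) factorizes as the
perfect-CSI ZF baseline times `(1 − NMSE_k)` times `1/(1 + Δ_RI)`. -/
theorem stmt_3
    (K M : ℕ) (hK : 1 ≤ K) (hMK : K < M)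
    (β μ pd pp : Fin K → ℝ)
    (ρ Φ2 σ2 τ : ℝ)
    (hβ : ∀ k, 0 < β k) (hpd : ∀ k, 0 < pd k) (hpp : ∀ k, 0 < pp k)
    (hρ : 0 < ρ) (hΦ2 : 0 < Φ2) (hσ2 : 0 < σ2) (hτ : 0 < τ)
    (hμ : ∀ k, μ k = ρ * τ * pp k * β k * Φ2 / (ρ * τ * pp k * β k * Φ2 + σ2))
    (Ψ : Matrix (Fin K) (Fin K) ℝ)
    (hΨ : Ψ = Matrix.diagonal (fun k => μ k * β k))
    (ΔRI : ℝ)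
    (hΔRI : ΔRI = ∑ k', pd k' * β k' / (τ * pp k' * β k' + σ2 / (ρ * Φ2)))
    (k : Fin K) :
    ((M : ℝ) - K) * pd k /
      ( ((∑ k', pd k' * β k' * (1 - μ k')) + σ2 / (ρ * Φ2)) * (Ψ⁻¹ k k) )
    = (((M : ℝ) - K) * pd k * β k / (σ2 / (ρ * Φ2)))
        * (1 - σ2 / (ρ * τ * pp k * β k * Φ2 + σ2))
        * (1 / (1 + ΔRI)) :=
  stmt_3_general K M β μ pd pp ρ Φ2 σ2 τ hβ hpp hρ hΦ2 hσ2 hτ hμ Ψ hΨ ΔRI hΔRI k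
end

section
/- Fix M, K, fixed vectors h̄_1, …, h̄_K ∈ ℂ^M with ‖h̄_k‖² = M, coefficients β_k > 0, powers p^d_k, p^p_k > 0, ρ, |Φ|², σ², τ > 0. Set all Rician factors equal to δ and let α_k(δ) = β_k/(δ+1), μ_k(δ) = ρ τ p^p_k α_k(δ) |Φ|² / (ρ τ p^p_k α_k(δ)|Φ|² + σ²). Then the Theorem-1 MRC SINR expression SINR_k^MRC(δ) = M p^d_k α_k (μ_k + δ)² / ( Σ_{k'} p^d_{k'} (δ α_{k'} + μ_k β_{k'}) + Σ_{k'≠k} p^d_{k'} (|h̄_k^H h̄_{k'}|²/M) δ² α_{k'} + (σ²/(ρ|Φ|²))(μ_k + δ) ) converges, as δ → ∞, to the pure-LoS value M p^d_k β_k / ( Σ_{k'≠k} p^d_{k'} (|h̄_k^H h̄_{k'}|²/M) β_{k'} + σ²/(ρ|Φ|²) ). -/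
open Finset Filter Topology

/-!
Multiply numerator and denominator by `(δ + 1) / δ²`. Since `α_k(δ) → 0`, also `μ_k(δ) → 0`, so
the numerator becomes `M p_k β_k ((μ_k + δ) / δ)² → M p_k β_k`. In the denominator the LoS
interference sum becomes exactly its pure-LoS value, the noise term tends to `σ² / (ρ |Φ|²)`, and
the first sum converges, hence is killed by the factor `(δ + 1) / δ² → 0`.
-/

lemma tendsto_div_of_tendsto_mul_right {α : Type*} {l : Filter α} {f g r : α → ℝ} {a b : ℝ}
    (hf : Tendsto (fun x => f x * r x) l (𝓝 a)) (hg : Tendsto (fun x => g x * r x) l (𝓝 b))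
    (hb : b ≠ 0) (hr : ∀ᶠ x in l, r x ≠ 0) :
    Tendsto (fun x => f x / g x) l (𝓝 (a / b)) :=
  (hf.div hg hb).congr' (hr.mono fun _ hx => mul_div_mul_right _ _ hx)

lemma tendsto_div_add_const_of_tendsto_zero {α : Type*} {l : Filter α} {x : α → ℝ} {c : ℝ}
    (hx : Tendsto x l (𝓝 0)) (hc : c ≠ 0) :
    Tendsto (fun t => x t / (x t + c)) l (𝓝 0) := by
  have h := hx.div (hx.add_const c) (by rwa [zero_add])
  rwa [zero_div] at h

lemma tendsto_add_self_div_self_atTop {m : ℝ → ℝ} {a : ℝ} (hm : Tendsto m atTop (𝓝 a)) :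
    Tendsto (fun δ => (m δ + δ) / δ) atTop (𝓝 1) := by
  have h : Tendsto (fun δ => m δ / δ + 1) atTop (𝓝 (0 + 1)) :=
    (hm.div_atTop tendsto_id).add_const 1
  rw [zero_add] at h
  refine h.congr' ?_
  filter_upwards [eventually_ne_atTop 0] with δ hδ
  rw [add_div, div_self hδ]

lemma tendsto_const_div_add_one_atTop (b : ℝ) :
    Tendsto (fun δ : ℝ => b / (δ + 1)) atTop (𝓝 0) :=
  tendsto_const_nhds.div_atTop (tendsto_atTop_add_const_right _ 1 tendsto_id)

lemma tendsto_mul_div_add_one_atTop (b : ℝ) :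
    Tendsto (fun δ : ℝ => δ * (b / (δ + 1))) atTop (𝓝 b) := by
  have h : Tendsto (fun δ : ℝ => b - b / (δ + 1)) atTop (𝓝 (b - 0)) :=
    tendsto_const_nhds.sub (tendsto_const_div_add_one_atTop b)
  rw [sub_zero] at h
  refine h.congr' ?_
  filter_upwards [eventually_gt_atTop 0] with δ hδ
  field_simp
  ring

theorem tendsto_mrcSINR_atTop {ι : Type*} [Fintype ι] [DecidableEq ι] (k : ι) (a s : ℝ)
    (β p c : ι → ℝ) {m : ℝ → ℝ} (hm : Tendsto m atTop (𝓝 0))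
    (hden : ∑ k' ∈ univ.erase k, c k' * β k' + s ≠ 0) :
    Tendsto (fun δ : ℝ =>
        a * (β k / (δ + 1)) * (m δ + δ) ^ 2 /
          ((∑ k', p k' * (δ * (β k' / (δ + 1)) + m δ * β k'))
            + (∑ k' ∈ univ.erase k, c k' * δ ^ 2 * (β k' / (δ + 1)))
            + s * (m δ + δ)))
      atTop (𝓝 (a * β k / (∑ k' ∈ univ.erase k, c k' * β k' + s))) := by
  have hq : Tendsto (fun δ => (m δ + δ) / δ) atTop (𝓝 1) := tendsto_add_self_div_self_atTop hm
  have hq₁ : Tendsto (fun δ : ℝ => (1 + δ) / δ) atTop (𝓝 1) :=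
    tendsto_add_self_div_self_atTop (tendsto_const_nhds (x := (1 : ℝ)))
  have hr : Tendsto (fun δ : ℝ => (δ + 1) / δ ^ 2) atTop (𝓝 0) :=
    (hq₁.div_atTop tendsto_id).congr fun δ => by simp only [id]; ring
  have hpos : ∀ᶠ δ : ℝ in atTop, 0 < δ := eventually_gt_atTop 0
  refine tendsto_div_of_tendsto_mul_right (r := fun δ => (δ + 1) / δ ^ 2) ?_ ?_ hden
    (hpos.mono fun δ hδ => by positivity)
  · have h := (hq.pow 2).const_mul (a * β k)
    rw [one_pow, mul_one] at h
    refine h.congr' (hpos.mono fun δ hδ => ?_)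
    field_simp
  · have hsignal : Tendsto (fun δ => ∑ k', p k' * (δ * (β k' / (δ + 1)) + m δ * β k'))
        atTop (𝓝 (∑ k', p k' * (β k' + 0 * β k'))) :=
      tendsto_finsetSum _ fun k' _ =>
        ((tendsto_mul_div_add_one_atTop _).add (hm.mul_const _)).const_mul _
    have hlos : ∀ᶠ δ : ℝ in atTop, (∑ k' ∈ univ.erase k, c k' * δ ^ 2 * (β k' / (δ + 1))) *
        ((δ + 1) / δ ^ 2) = ∑ k' ∈ univ.erase k, c k' * β k' := hpos.mono fun δ hδ => by
      rw [sum_mul]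
      refine sum_congr rfl fun k' _ => ?_
      field_simp
    have hnoise : Tendsto (fun δ => s * ((m δ + δ) / δ) * ((1 + δ) / δ)) atTop (𝓝 (s * 1 * 1)) :=
      (hq.const_mul s).mul hq₁
    have h := ((hsignal.mul hr).add (tendsto_const_nhds.congr' (hlos.mono fun _ h => h.symm))).add
      hnoise
    rw [mul_zero, zero_add, mul_one, mul_one] at h
    exact h.congr fun δ => by ring

theorem stmt_4_general
    (K M : ℕ)
    (β pd pp : Fin K → ℝ) (hbar : Fin K → Fin M → ℂ)
    (ρ Φ2 σ2 τ : ℝ)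
    (hβ : ∀ k, 0 < β k) (hpd : ∀ k, 0 < pd k)
    (hρ : 0 < ρ) (hΦ2 : 0 < Φ2) (hσ2 : 0 < σ2)
    (α : ℝ → Fin K → ℝ) (hα : ∀ δ k, α δ k = β k / (δ + 1))
    (μ : ℝ → Fin K → ℝ)
    (hμ : ∀ δ k, μ δ k = ρ * τ * pp k * α δ k * Φ2 / (ρ * τ * pp k * α δ k * Φ2 + σ2))
    (C : Fin K → Fin K → ℝ)
    (hC : ∀ k k', C k k' = ‖∑ m, (starRingEnd ℂ) (hbar k m) * hbar k' m‖ ^ 2)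
    (k : Fin K) :
    Tendsto (fun δ : ℝ =>
        M * pd k * α δ k * (μ δ k + δ) ^ 2 /
          ( (∑ k', pd k' * (δ * α δ k' + μ δ k * β k'))
            + (∑ k' ∈ univ.erase k, pd k' * (C k k' / M) * δ ^ 2 * α δ k')
            + (σ2 / (ρ * Φ2)) * (μ δ k + δ) ))
      atTop
      (nhds (M * pd k * β k /
        ( (∑ k' ∈ univ.erase k, pd k' * (C k k' / M) * β k') + σ2 / (ρ * Φ2) ))) := by
  have hμ0 : Tendsto (fun δ => μ δ k) atTop (𝓝 0) := by
    have hα0 : Tendsto (fun δ : ℝ => ρ * τ * pp k * (β k / (δ + 1)) * Φ2) atTop (𝓝 0) := by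
      simpa using ((tendsto_const_div_add_one_atTop (β k)).const_mul (ρ * τ * pp k)).mul_const Φ2
    simp only [hμ, hα]
    exact tendsto_div_add_const_of_tendsto_zero hα0 hσ2.ne'
  have hlos : 0 ≤ ∑ k' ∈ univ.erase k, pd k' * (C k k' / M) * β k' :=
    sum_nonneg fun k' _ => mul_nonneg (mul_nonneg (hpd k').le
      (div_nonneg (by rw [hC]; positivity) M.cast_nonneg)) (hβ k').le
  simp only [hα]
  exact tendsto_mrcSINR_atTop k _ _ β pd _ hμ0 (by positivity)

/-- With a common Rician factor `δ → ∞`, the Theorem-1 MRC SINR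
converges to its pure-LoS value. -/
theorem stmt_4
    (K M : ℕ) (hK : 1 ≤ K) (hM : 1 ≤ M)
    (β pd pp : Fin K → ℝ) (hbar : Fin K → Fin M → ℂ)
    (ρ Φ2 σ2 τ : ℝ)
    (hβ : ∀ k, 0 < β k) (hpd : ∀ k, 0 < pd k) (hpp : ∀ k, 0 < pp k)
    (hρ : 0 < ρ) (hΦ2 : 0 < Φ2) (hσ2 : 0 < σ2) (hτ : 0 < τ)
    (hnorm : ∀ k, ∑ m, ‖hbar k m‖ ^ 2 = M)
    (α : ℝ → Fin K → ℝ) (hα : ∀ δ k, α δ k = β k / (δ + 1))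
    (μ : ℝ → Fin K → ℝ)
    (hμ : ∀ δ k, μ δ k = ρ * τ * pp k * α δ k * Φ2 / (ρ * τ * pp k * α δ k * Φ2 + σ2))
    (C : Fin K → Fin K → ℝ)
    (hC : ∀ k k', C k k' = ‖∑ m, (starRingEnd ℂ) (hbar k m) * hbar k' m‖ ^ 2)
    (k : Fin K) :
    Tendsto (fun δ : ℝ =>
        M * pd k * α δ k * (μ δ k + δ) ^ 2 /
          ( (∑ k', pd k' * (δ * α δ k' + μ δ k * β k'))
            + (∑ k' ∈ univ.erase k, pd k' * (C k k' / M) * δ ^ 2 * α δ k')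
            + (σ2 / (ρ * Φ2)) * (μ δ k + δ) ))
      atTop
      (nhds (M * pd k * β k /
        ( (∑ k' ∈ univ.erase k, pd k' * (C k k' / M) * β k') + σ2 / (ρ * Φ2) ))) :=
  stmt_4_general K M β pd pp hbar ρ Φ2 σ2 τ hβ hpd hρ hΦ2 hσ2 α hα μ hμ C hC k
end

section
/- (Power-scaling law, Rayleigh, MRC.) Fix K ≥ 1, β_1, …, β_K > 0, E > 0, ρ > 0, |Φ|² > 0, σ² > 0, and an exponent ε_d ∈ (0,1); set ε_p = 1 − ε_d. For each number of elements M, let the data power be p^d(M) = E/M^{ε_d} and the pilot energy be τ p^p(M) = E/M^{ε_p}, and define μ_k(M) = ρ (E/M^{ε_p}) β_k |Φ|² / ( ρ (E/M^{ε_p}) β_k |Φ|² + σ² ) and SINR_k^MRC(M) = M p^d(M) β_k μ_k(M) / ( Σ_{k'=1}^K p^d(M) β_{k'} + σ²/(ρ|Φ|²) ). Then lim_{M → ∞} SINR_k^MRC(M) = ρ² |Φ|⁴ β_k² E² / σ⁴. -/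
/-!
Since `ε_d + ε_p = 1`, the array gain `M p^d = E M^{ε_p}` exactly compensates the vanishing
pilot SNR `s(M) = ρ (E / M^{ε_p}) β_k |Φ|²`: their product is the constant `c = ρ E β_k |Φ|²`, so
`M^{ε_p} μ_k = M^{ε_p} s / (s + σ²) = c / (s + σ²) → c / σ²`. Meanwhile the interference
`Σ p^d β_{k'}` vanishes, leaving the denominator `σ² / (ρ |Φ|²)`.
-/

open Finset Filter Topology

theorem Real.mul_div_rpow_of_add_eq_one {x εd εp : ℝ} (hx : 0 < x) (h : εd + εp = 1) (E : ℝ) :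
    x * (E / x ^ εd) = E * x ^ εp := by
  have hsplit : x ^ εd * x ^ εp = x := by rw [← Real.rpow_add hx, h, Real.rpow_one]
  have hpos : 0 < x ^ εd := Real.rpow_pos_of_pos hx εd
  field_simp
  linear_combination -E * hsplit

theorem tendsto_const_div_natCast_rpow_atTop (E : ℝ) {ε : ℝ} (hε : 0 < ε) :
    Tendsto (fun M : ℕ => E / (M : ℝ) ^ ε) atTop (𝓝 0) :=
  tendsto_const_nhds.div_atTop ((tendsto_rpow_atTop hε).comp tendsto_natCast_atTop_atTop)

theorem tendsto_mul_div_add_of_mul_eq {α : Type*} {l : Filter α} {t s : α → ℝ} {c σ : ℝ}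
    (hσ : σ ≠ 0) (hs : Tendsto s l (𝓝 0)) (hts : ∀ᶠ a in l, t a * s a = c) :
    Tendsto (fun a => t a * (s a / (s a + σ))) l (𝓝 (c / σ)) := by
  have hlim : Tendsto (fun a => c / (s a + σ)) l (𝓝 (c / σ)) := by
    have hden : Tendsto (fun a => s a + σ) l (𝓝 σ) := by simpa using hs.add_const σ
    exact tendsto_const_nhds.div hden hσ
  refine hlim.congr' ?_
  filter_upwards [hts] with a ha
  rw [← mul_div_assoc, ha]

theorem stmt_6_general
    (K : ℕ)
    (β : Fin K → ℝ) (E ρ Φ2 σ2 εd εp : ℝ)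
    (hρ : 0 < ρ) (hΦ2 : 0 < Φ2) (hσ2 : 0 < σ2)
    (hεd : εd ∈ Set.Ioo (0 : ℝ) 1) (hεp : εp = 1 - εd)
    (pd : ℕ → ℝ) (hpd : ∀ M, pd M = E / (M : ℝ) ^ εd)
    (μ : ℕ → Fin K → ℝ)
    (hμ : ∀ M k, μ M k = ρ * (E / (M : ℝ) ^ εp) * β k * Φ2
        / (ρ * (E / (M : ℝ) ^ εp) * β k * Φ2 + σ2))
    (k : Fin K) :
    Tendsto (fun M : ℕ =>
        (M : ℝ) * pd M * β k * μ M k / ((∑ k', pd M * β k') + σ2 / (ρ * Φ2)))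
      atTop
      (nhds (ρ ^ 2 * Φ2 ^ 2 * β k ^ 2 * E ^ 2 / σ2 ^ 2)) := by
  obtain ⟨hεd0, hεd1⟩ := hεd
  have hεp0 : 0 < εp := by linarith
  have hε : εd + εp = 1 := by linarith
  have hsnr : Tendsto (fun M : ℕ => ρ * (E / (M : ℝ) ^ εp) * β k * Φ2) atTop (𝓝 0) := by
    simpa using (((tendsto_const_div_natCast_rpow_atTop E hεp0).const_mul ρ).mul_const
      (β k)).mul_const Φ2
  have hgain : Tendsto (fun M : ℕ => (M : ℝ) ^ εp * μ M k) atTop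
      (𝓝 (ρ * E * β k * Φ2 / σ2)) := by
    simp only [hμ]
    refine tendsto_mul_div_add_of_mul_eq hσ2.ne' hsnr ?_
    filter_upwards [eventually_gt_atTop 0] with M hM
    have : (M : ℝ) ^ εp ≠ 0 := (Real.rpow_pos_of_pos (Nat.cast_pos.mpr hM) εp).ne'
    field_simp
  have hload : Tendsto (fun M : ℕ => (∑ k', pd M * β k') + σ2 / (ρ * Φ2)) atTop
      (𝓝 (σ2 / (ρ * Φ2))) := by
    simp only [hpd]
    simpa using (tendsto_finsetSum univ fun k' _ =>
      (tendsto_const_div_natCast_rpow_atTop E hεd0).mul_const (β k')).add_const (σ2 / (ρ * Φ2))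
  have hsinr := (hgain.const_mul (E * β k)).div hload (by positivity)
  rw [show E * β k * (ρ * E * β k * Φ2 / σ2) / (σ2 / (ρ * Φ2))
      = ρ ^ 2 * Φ2 ^ 2 * β k ^ 2 * E ^ 2 / σ2 ^ 2 by field_simp] at hsinr
  refine hsinr.congr' ?_
  filter_upwards [eventually_gt_atTop 0] with M hM
  simp only [Pi.div_apply]
  rw [hpd, Real.mul_div_rpow_of_add_eq_one (Nat.cast_pos.mpr hM) hε]
  ring

/-- Power-scaling law for MRC under Rayleigh fading: with
`p^d = E/M^{ε_d}` and `τ p^p = E/M^{ε_p}`, `ε_d + ε_p = 1`, the MRC SINR of user `k`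
tends to `ρ²|Φ|⁴ β_k² E² / σ⁴` as `M → ∞`. -/
theorem stmt_6
    (K : ℕ) (hK : 1 ≤ K)
    (β : Fin K → ℝ) (E ρ Φ2 σ2 εd εp : ℝ)
    (hβ : ∀ k, 0 < β k) (hE : 0 < E) (hρ : 0 < ρ) (hΦ2 : 0 < Φ2) (hσ2 : 0 < σ2)
    (hεd : εd ∈ Set.Ioo (0 : ℝ) 1) (hεp : εp = 1 - εd)
    (pd : ℕ → ℝ) (hpd : ∀ M, pd M = E / (M : ℝ) ^ εd)
    (μ : ℕ → Fin K → ℝ)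
    (hμ : ∀ M k, μ M k = ρ * (E / (M : ℝ) ^ εp) * β k * Φ2
        / (ρ * (E / (M : ℝ) ^ εp) * β k * Φ2 + σ2))
    (k : Fin K) :
    Tendsto (fun M : ℕ =>
        (M : ℝ) * pd M * β k * μ M k / ((∑ k', pd M * β k') + σ2 / (ρ * Φ2)))
      atTop
      (nhds (ρ ^ 2 * Φ2 ^ 2 * β k ^ 2 * E ^ 2 / σ2 ^ 2)) :=
  stmt_6_general K β E ρ Φ2 σ2 εd εp hρ hΦ2 hσ2 hεd hεp pd hpd μ hμ k
end

section
/- (Power-scaling law, Rayleigh, ZF.) Fix K ≥ 1, β_1, …, β_K > 0, E > 0, ρ > 0, |Φ|² > 0, σ² > 0, and an exponent ε_d ∈ (0,1); set ε_p = 1 − ε_d. For each M > K, let p^d(M) = E/M^{ε_d}, τ p^p(M) = E/M^{ε_p}, μ_k(M) = ρ (E/M^{ε_p}) β_k |Φ|² / ( ρ (E/M^{ε_p}) β_k |Φ|² + σ² ), and SINR_k^ZF(M) = (M−K) p^d(M) β_k μ_k(M) / ( Σ_{k'=1}^K p^d(M) β_{k'} (1 − μ_{k'}(M)) + σ²/(ρ|Φ|²)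 ). Then lim_{M → ∞} SINR_k^ZF(M) = ρ² |Φ|⁴ β_k² E² / σ⁴. -/
open Finset Filter Topology

/-!
The estimation quality decays like `μ_k ≈ ρ E β_k Φ2 / (σ2 M^{εp})`, so the useful signal
`(M - K) p^d β_k μ_k ≈ M · (E / M^{εd}) · β_k · ρ E β_k Φ2 / (σ2 M^{εp})` stays bounded exactly
because `εd + εp = 1`, and tends to `E β_k · ρ E β_k Φ2 / σ2`. Every interference term carries
the vanishing data power `p^d`, so the denominator tends to the noise term `σ2 / (ρ Φ2)`.
-/

lemma tendsto_const_div_natCast_rpow_nhds_zero (c : ℝ) {ε : ℝ} (hε : 0 < ε) :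
    Tendsto (fun M : ℕ => c / (M : ℝ) ^ ε) atTop (𝓝 0) :=
  tendsto_const_nhds.div_atTop ((tendsto_rpow_atTop hε).comp tendsto_natCast_atTop_atTop)

lemma tendsto_div_self_add_nhds_zero {α : Type*} {l : Filter α} {f : α → ℝ} {s : ℝ}
    (hf : Tendsto f l (𝓝 0)) (hs : s ≠ 0) :
    Tendsto (fun x => f x / (f x + s)) l (𝓝 0) := by
  have h := hf.div (hf.add_const s) (by rwa [zero_add])
  rwa [zero_div] at h

lemma tendsto_sub_mul_div_rpow_mul_div_rpow_div_add {εd εp : ℝ} (hε : εd + εp = 1)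
    (hεp : 0 < εp) (K E b : ℝ) {c s : ℝ} (hc : 0 ≤ c) (hs : 0 < s) :
    Tendsto (fun M : ℕ => ((M : ℝ) - K) * (E / (M : ℝ) ^ εd) * b *
        (c / (M : ℝ) ^ εp / (c / (M : ℝ) ^ εp + s))) atTop (𝓝 (E * b * c / s)) := by
  have hfactor : Tendsto (fun M : ℕ => (1 - K / (M : ℝ)) * (E * b * c)) atTop
      (𝓝 ((1 - 0) * (E * b * c))) :=
    ((tendsto_const_nhds.div_atTop tendsto_natCast_atTop_atTop).const_sub 1).mul_const _
  have hden : Tendsto (fun M : ℕ => c / (M : ℝ) ^ εp + s) atTop (𝓝 (0 + s)) :=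
    (tendsto_const_div_natCast_rpow_nhds_zero c hεp).add_const s
  have hlim : Tendsto (fun M : ℕ => (1 - K / (M : ℝ)) * (E * b * c) / (c / (M : ℝ) ^ εp + s))
      atTop (𝓝 ((1 - 0) * (E * b * c) / (0 + s))) :=
    hfactor.div hden (by rw [zero_add]; exact hs.ne')
  rw [sub_zero, one_mul, zero_add] at hlim
  refine hlim.congr' ?_
  filter_upwards [eventually_ge_atTop 1] with M hM
  have hM0 : (0 : ℝ) < M := by exact_mod_cast hM
  have hMεp : (0 : ℝ) < (M : ℝ) ^ εp := Real.rpow_pos_of_pos hM0 _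
  have hMεd : (0 : ℝ) < (M : ℝ) ^ εd := Real.rpow_pos_of_pos hM0 _
  have hsplit : (M : ℝ) ^ εd * (M : ℝ) ^ εp = M := by
    rw [← Real.rpow_add hM0, hε, Real.rpow_one]
  have hden_ne : c / (M : ℝ) ^ εp + s ≠ 0 := by positivity
  field_simp
  linear_combination ((M : ℝ) - K) * (E * b * c) * hsplit

theorem stmt_7_general
    (K : ℕ)
    (β : Fin K → ℝ) (E ρ Φ2 σ2 εd εp : ℝ)
    (hβ : ∀ k, 0 < β k) (hE : 0 < E) (hρ : 0 < ρ) (hΦ2 : 0 < Φ2) (hσ2 : 0 < σ2)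
    (hεd : εd ∈ Set.Ioo (0 : ℝ) 1) (hεp : εp = 1 - εd)
    (pd : ℕ → ℝ) (hpd : ∀ M, pd M = E / (M : ℝ) ^ εd)
    (μ : ℕ → Fin K → ℝ)
    (hμ : ∀ M k, μ M k = ρ * (E / (M : ℝ) ^ εp) * β k * Φ2
        / (ρ * (E / (M : ℝ) ^ εp) * β k * Φ2 + σ2))
    (k : Fin K) :
    Tendsto (fun M : ℕ =>
        ((M : ℝ) - K) * pd M * β k * μ M k /
          ((∑ k', pd M * β k' * (1 - μ M k')) + σ2 / (ρ * Φ2)))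
      atTop
      (nhds (ρ ^ 2 * Φ2 ^ 2 * β k ^ 2 * E ^ 2 / σ2 ^ 2)) := by
  obtain ⟨hεd0, hεd1⟩ := hεd
  have hεp0 : 0 < εp := by linarith
  have hμ' : ∀ M k', μ M k' = ρ * E * β k' * Φ2 / (M : ℝ) ^ εp /
      (ρ * E * β k' * Φ2 / (M : ℝ) ^ εp + σ2) := fun M k' => by rw [hμ]; ring
  have hpd0 : Tendsto pd atTop (𝓝 0) := by
    rw [funext hpd]
    exact tendsto_const_div_natCast_rpow_nhds_zero E hεd0
  have hμ0 (k' : Fin K) : Tendsto (μ · k') atTop (𝓝 0) := by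
    simpa only [hμ'] using tendsto_div_self_add_nhds_zero
      (tendsto_const_div_natCast_rpow_nhds_zero (ρ * E * β k' * Φ2) hεp0) hσ2.ne'
  have hsignal : Tendsto (fun M : ℕ => ((M : ℝ) - K) * pd M * β k * μ M k) atTop
      (𝓝 (E * β k * (ρ * E * β k * Φ2) / σ2)) := by
    simpa only [hpd, hμ'] using tendsto_sub_mul_div_rpow_mul_div_rpow_div_add
      (by linarith) hεp0 K E (β k) (by have := hβ k; positivity) hσ2
  have hinterference : Tendsto (fun M => ∑ k', pd M * β k' * (1 - μ M k')) atTop (𝓝 0) := by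
    simpa using tendsto_finsetSum univ fun k' _ =>
      (hpd0.mul_const (β k')).mul ((hμ0 k').const_sub 1)
  rw [show ρ ^ 2 * Φ2 ^ 2 * β k ^ 2 * E ^ 2 / σ2 ^ 2 =
      E * β k * (ρ * E * β k * Φ2) / σ2 / (0 + σ2 / (ρ * Φ2)) by field_simp; ring]
  exact hsignal.div (hinterference.add_const _) (by positivity)

/-- Power-scaling law for ZF under Rayleigh fading: with
`p^d = E/M^{ε_d}` and `τ p^p = E/M^{ε_p}`, `ε_d + ε_p = 1`, the ZF SINR of user `k`
tends to `ρ²|Φ|⁴ β_k² E² / σ⁴` as `M → ∞`. -/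
theorem stmt_7
    (K : ℕ) (hK : 1 ≤ K)
    (β : Fin K → ℝ) (E ρ Φ2 σ2 εd εp : ℝ)
    (hβ : ∀ k, 0 < β k) (hE : 0 < E) (hρ : 0 < ρ) (hΦ2 : 0 < Φ2) (hσ2 : 0 < σ2)
    (hεd : εd ∈ Set.Ioo (0 : ℝ) 1) (hεp : εp = 1 - εd)
    (pd : ℕ → ℝ) (hpd : ∀ M, pd M = E / (M : ℝ) ^ εd)
    (μ : ℕ → Fin K → ℝ)
    (hμ : ∀ M k, μ M k = ρ * (E / (M : ℝ) ^ εp) * β k * Φ2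
        / (ρ * (E / (M : ℝ) ^ εp) * β k * Φ2 + σ2))
    (k : Fin K) :
    Tendsto (fun M : ℕ =>
        ((M : ℝ) - K) * pd M * β k * μ M k /
          ((∑ k', pd M * β k' * (1 - μ M k')) + σ2 / (ρ * Φ2)))
      atTop
      (nhds (ρ ^ 2 * Φ2 ^ 2 * β k ^ 2 * E ^ 2 / σ2 ^ 2)) :=
  stmt_7_general K β E ρ Φ2 σ2 εd εp hβ hE hρ hΦ2 hσ2 hεd hεp pd hpd μ hμ k
end

section
/- (Power-scaling law, Rician, MRC.) Fix K ≥ 1, Rician factors δ_k > 0, coefficients β_k > 0, E > 0, ρ > 0, |Φ|² > 0, σ² > 0, an exponent ε_p ∈ (0,1), and spatial frequencies x_1, …, x_K ∈ ℝ that are pairwise distinct modulo 2π. For each M, let h̄_k(M) = (e^{-i m x_k})_{m=0}^{M−1} ∈ ℂ^M, p^d(M) = E/M, τ p^p(M) = E/M^{ε_p}, α_k = β_k/(δ_k+1), μ_k(M) = ρ (E/M^{ε_p}) α_k |Φ|² / ( ρ (E/M^{ε_p}) α_k |Φ|² + σ² ), and SINR_k^MRC(M) = M p^d(M) α_k (μ_k(M)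 + δ_k)² / ( Σ_{k'=1}^K p^d(M) (δ_k α_{k'} + μ_k(M) β_{k'}) + Σ_{k'≠k} p^d(M) (|h̄_k(M)^H h̄_{k'}(M)|²/M) δ_k δ_{k'} α_{k'} + (σ²/(ρ|Φ|²)) (μ_k(M) + δ_k) ). Then lim_{M → ∞} SINR_k^MRC(M) = ρ |Φ|² δ_k β_k E / ((δ_k + 1) σ²). -/
open Finset Filter Real

/-!
As `M → ∞` the data power `E / M` kills both interference sums in the denominator and the pilot
energy `E / M ^ εp` drives the estimation quality `μ_k` to `0`, while `M · p^d = E` keeps the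
numerator at `E α_k δ_k²`; only the noise term `(σ² / (ρ|Φ|²)) δ_k` survives. The cross terms
vanish because `h̄_kᴴ h̄_k'` is a geometric sum in the unit-modulus ratio `e^{i(x_k - x_k')} ≠ 1`,
hence bounded in `M`, so `|h̄_kᴴ h̄_k'|² / M → 0`.
-/

lemma norm_geom_sum_le_of_norm_le_one {𝕜 : Type*} [NormedDivisionRing 𝕜] {r : 𝕜}
    (hr : ‖r‖ ≤ 1) (hr1 : r ≠ 1) (n : ℕ) :
    ‖∑ i ∈ range n, r ^ i‖ ≤ 2 / ‖r - 1‖ := by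
  rw [geom_sum_eq hr1, norm_div]
  gcongr
  calc ‖r ^ n - 1‖ ≤ ‖r ^ n‖ + ‖(1 : 𝕜)‖ := norm_sub_le _ _
    _ ≤ 1 + 1 := by rw [norm_pow, norm_one]; gcongr; exact pow_le_one₀ (norm_nonneg r) hr
    _ = 2 := one_add_one_eq_two

lemma Complex.exp_ofReal_mul_I_ne_one {θ : ℝ} (h : ∀ n : ℤ, θ ≠ 2 * π * n) :
    Complex.exp (θ * Complex.I) ≠ 1 := by
  rw [Ne, Complex.exp_eq_one_iff]
  rintro ⟨n, hn⟩
  apply h n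
  have : (θ : ℂ) = ((2 * π * n : ℝ) : ℂ) := by
    apply mul_right_cancel₀ Complex.I_ne_zero
    rw [hn]; push_cast; ring
  exact_mod_cast this

lemma Filter.Tendsto.div_self_add_const_nhds_zero {ι 𝕜 : Type*} [NormedField 𝕜] {l : Filter ι}
    {f : ι → 𝕜} {c : 𝕜} (hf : Tendsto f l (nhds 0)) (hc : c ≠ 0) :
    Tendsto (fun i => f i / (f i + c)) l (nhds 0) := by
  have h := hf.div (hf.add_const c) (by rwa [zero_add])
  rwa [zero_div] at h

lemma tendsto_const_div_natCast_rpow_atTop_nhds_zero (C : ℝ) {ε : ℝ} (hε : 0 < ε) :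
    Tendsto (fun M : ℕ => C / (M : ℝ) ^ ε) atTop (nhds 0) :=
  tendsto_const_nhds.div_atTop ((tendsto_rpow_atTop hε).comp tendsto_natCast_atTop_atTop)

noncomputable def steeringVector (x : ℝ) (M : ℕ) : Fin M → ℂ :=
  fun m => Complex.exp (-(((m : ℕ) : ℝ) : ℂ) * x * Complex.I)

lemma sum_conj_steeringVector_mul_eq_geom_sum (x y : ℝ) (M : ℕ) :
    ∑ m, (starRingEnd ℂ) (steeringVector x M m) * steeringVector y M m
      = ∑ m ∈ range M, Complex.exp ((x - y : ℝ) * Complex.I) ^ m := by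
  rw [← Fin.sum_univ_eq_sum_range]
  refine sum_congr rfl fun m _ => ?_
  rw [steeringVector, steeringVector, ← Complex.exp_conj, ← Complex.exp_add,
    ← Complex.exp_nat_mul]
  simp only [map_mul, map_neg, Complex.conj_ofReal, Complex.conj_I]
  push_cast
  ring_nf

lemma tendsto_norm_sum_conj_steeringVector_mul_sq_div {x y : ℝ}
    (h : ∀ n : ℤ, x - y ≠ 2 * π * n) :
    Tendsto (fun M : ℕ =>
      ‖∑ m, (starRingEnd ℂ) (steeringVector x M m) * steeringVector y M m‖ ^ 2 / M)
      atTop (nhds 0) := by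
  set r := Complex.exp ((x - y : ℝ) * Complex.I)
  have hr : ‖r‖ ≤ 1 := (Complex.norm_exp_ofReal_mul_I _).le
  refine squeeze_zero (fun M => by positivity) (fun M => ?_)
    (tendsto_const_div_atTop_nhds_zero_nat ((2 / ‖r - 1‖) ^ 2))
  rw [sum_conj_steeringVector_mul_eq_geom_sum]
  gcongr
  exact norm_geom_sum_le_of_norm_le_one hr (Complex.exp_ofReal_mul_I_ne_one h) M

theorem stmt_8_general
    (K : ℕ)
    (δ β α : Fin K → ℝ) (x : Fin K → ℝ) (E ρ Φ2 σ2 εp : ℝ)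
    (hδ : ∀ k, 0 < δ k)
    (hρ : 0 < ρ) (hΦ2 : 0 < Φ2) (hσ2 : 0 < σ2)
    (hεp : εp ∈ Set.Ioo (0 : ℝ) 1)
    (hx : ∀ k k', k ≠ k' → ∀ n : ℤ, x k - x k' ≠ 2 * π * n)
    (hα : ∀ k, α k = β k / (δ k + 1))
    (hbar : (M : ℕ) → Fin K → Fin M → ℂ)
    (hhbar : ∀ (M : ℕ) (k : Fin K) (m : Fin M),
      hbar M k m = Complex.exp (-(((m : ℕ) : ℝ) : ℂ) * (x k : ℂ) * Complex.I))
    (pd : ℕ → ℝ) (hpd : ∀ M, pd M = E / (M : ℝ))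
    (μ : ℕ → Fin K → ℝ)
    (hμ : ∀ M k, μ M k = ρ * (E / (M : ℝ) ^ εp) * α k * Φ2
        / (ρ * (E / (M : ℝ) ^ εp) * α k * Φ2 + σ2))
    (k : Fin K) :
    Tendsto (fun M : ℕ =>
        (M : ℝ) * pd M * α k * (μ M k + δ k) ^ 2 /
          ( (∑ k', pd M * (δ k * α k' + μ M k * β k'))
            + (∑ k' ∈ univ.erase k, pd M *
                (‖∑ m, (starRingEnd ℂ) (hbar M k m) * hbar M k' m‖ ^ 2 / M)
                * δ k * δ k' * α k')
            + (σ2 / (ρ * Φ2)) * (μ M k + δ k) ))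
      atTop
      (nhds (ρ * Φ2 * δ k * β k * E / ((δ k + 1) * σ2))) := by
  have hsteering : ∀ M k', hbar M k' = steeringVector (x k') M := fun M k' => funext (hhbar M k')
  have hpd0 : Tendsto pd atTop (nhds 0) := by
    simpa only [← hpd] using tendsto_const_div_atTop_nhds_zero_nat E
  have hμ0 : Tendsto (μ · k) atTop (nhds 0) := by
    simp only [hμ]
    refine Tendsto.div_self_add_const_nhds_zero ?_ hσ2.ne'
    have hpilot := tendsto_const_div_natCast_rpow_atTop_nhds_zero E hεp.1
    simpa using ((hpilot.const_mul ρ).mul_const (α k)).mul_const Φ2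
  have hnum : Tendsto (fun M : ℕ => (M : ℝ) * pd M * α k * (μ M k + δ k) ^ 2) atTop
      (nhds (E * α k * δ k ^ 2)) := by
    have h := ((hμ0.add_const (δ k)).pow 2).const_mul (E * α k)
    rw [zero_add] at h
    refine h.congr' ?_
    filter_upwards [eventually_ne_atTop 0] with M hM
    rw [hpd, mul_div_cancel₀ E (Nat.cast_ne_zero.mpr hM), mul_assoc]
  have hcross : ∀ k' ∈ univ.erase k, Tendsto (fun M : ℕ => pd M *
      (‖∑ m, (starRingEnd ℂ) (hbar M k m) * hbar M k' m‖ ^ 2 / M) * δ k * δ k' * α k')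
      atTop (nhds 0) := by
    intro k' hk'
    simp only [hsteering]
    simpa using (((hpd0.mul (tendsto_norm_sum_conj_steeringVector_mul_sq_div
      (hx k k' (ne_of_mem_erase hk').symm))).mul_const (δ k)).mul_const (δ k')).mul_const (α k')
  have hden := ((tendsto_finsetSum univ fun k' _ =>
      hpd0.mul ((tendsto_const_nhds (x := δ k * α k')).add (hμ0.mul_const (β k')))).add
    (tendsto_finsetSum _ hcross)).add ((hμ0.add_const (δ k)).const_mul (σ2 / (ρ * Φ2)))
  simp only [zero_mul, add_zero, sum_const_zero, zero_add] at hden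
  have hδk := hδ k
  have hlimit : ρ * Φ2 * δ k * β k * E / ((δ k + 1) * σ2)
      = E * α k * δ k ^ 2 / (σ2 / (ρ * Φ2) * δ k) := by
    rw [hα k]
    field_simp
  rw [hlimit]
  exact hnum.div hden (by positivity)

/-- Power-scaling law for MRC under Rician fading with ULA steering
vectors `h̄_k(M) = (e^{-i m x_k})_{m<M}`: with `p^d = E/M` and `τ p^p = E/M^{ε_p}`,
the Theorem-1 MRC SINR of user `k` tends to `ρ|Φ|² δ_k β_k E/((δ_k+1)σ²)`. -/
theorem stmt_8
    (K : ℕ) (hK : 1 ≤ K)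
    (δ β α : Fin K → ℝ) (x : Fin K → ℝ) (E ρ Φ2 σ2 εp : ℝ)
    (hδ : ∀ k, 0 < δ k) (hβ : ∀ k, 0 < β k) (hE : 0 < E)
    (hρ : 0 < ρ) (hΦ2 : 0 < Φ2) (hσ2 : 0 < σ2)
    (hεp : εp ∈ Set.Ioo (0 : ℝ) 1)
    (hx : ∀ k k', k ≠ k' → ∀ n : ℤ, x k - x k' ≠ 2 * π * n)
    (hα : ∀ k, α k = β k / (δ k + 1))
    (hbar : (M : ℕ) → Fin K → Fin M → ℂ)
    (hhbar : ∀ (M : ℕ) (k : Fin K) (m : Fin M),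
      hbar M k m = Complex.exp (-(((m : ℕ) : ℝ) : ℂ) * (x k : ℂ) * Complex.I))
    (pd : ℕ → ℝ) (hpd : ∀ M, pd M = E / (M : ℝ))
    (μ : ℕ → Fin K → ℝ)
    (hμ : ∀ M k, μ M k = ρ * (E / (M : ℝ) ^ εp) * α k * Φ2
        / (ρ * (E / (M : ℝ) ^ εp) * α k * Φ2 + σ2))
    (k : Fin K) :
    Tendsto (fun M : ℕ =>
        (M : ℝ) * pd M * α k * (μ M k + δ k) ^ 2 /
          ( (∑ k', pd M * (δ k * α k' + μ M k * β k'))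
            + (∑ k' ∈ univ.erase k, pd M *
                (‖∑ m, (starRingEnd ℂ) (hbar M k m) * hbar M k' m‖ ^ 2 / M)
                * δ k * δ k' * α k')
            + (σ2 / (ρ * Φ2)) * (μ M k + δ k) ))
      atTop
      (nhds (ρ * Φ2 * δ k * β k * E / ((δ k + 1) * σ2))) :=
  stmt_8_general K δ β α x E ρ Φ2 σ2 εp hδ hρ hΦ2 hσ2 hεp hx hα hbar hhbar pd hpd μ hμ k
end

section
/- (High-power regime, Rayleigh, MRC: vanishing gain.) With equal pilot and data power p^d_k = p^p_k = p for all users, define for each p > 0 the Rayleigh MRC SINRs SINR^MRC(p) = M p β_k μ_k(p) / ( Σ_{k'} p β_{k'} + σ²/(ρ|Φ|²) ) with μ_k(p) = ρ τ p β_k |Φ|²/(ρ τ p β_k |Φ|² + σ²) for the atomic receiver, and SINR_RF^MRC(p) = M p β_k μ_{k,RF}(p) / ( Σ_{k'} p β_{k'} + σ_RF²/ρ_RF ) with μ_{k,RF}(p) = ρ_RF τ p β_k/(ρ_RF τ p β_k + σ_RF²) for the RF receiver. Then the achievable-rate difference ΔR(p) = ((T−τ)/T) [ log₂(1 + SINR^MRC(p))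 − log₂(1 + SINR_RF^MRC(p)) ] satisfies lim_{p → ∞} ΔR(p) = 0. -/
/-!
As `p → ∞` the channel estimates become exact (`μ_k(p) → 1` for both receivers) and the
noise terms `σ²/(ρ|Φ|²)`, `σ_RF²/ρ_RF` become negligible against the interference `p Σ β`,
so both SINRs tend to the same interference-limited value `M β_k / Σ β`; the gains of the
atomic receiver are therefore invisible at high power and the rate difference vanishes.
-/

open Finset Filter Topology

theorem tendsto_mul_div_mul_add_const {ν : ℝ → ℝ} {l b : ℝ} (hν : Tendsto ν atTop (𝓝 l))
    (hb : b ≠ 0) (c : ℝ) :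
    Tendsto (fun p => p * ν p / (p * b + c)) atTop (𝓝 (l / b)) := by
  have hden : Tendsto (fun p : ℝ => b + c / p) atTop (𝓝 b) := by
    simpa using tendsto_const_nhds.add ((tendsto_const_nhds (x := c)).div_atTop tendsto_id)
  refine (hν.div hden hb).congr' ?_
  filter_upwards [eventually_gt_atTop 0] with p hp
  rw [Pi.div_apply, ← mul_div_mul_left _ _ hp.ne', mul_add, mul_div_cancel₀ _ hp.ne']

theorem tendsto_mul_div_mul_add_const_self {a : ℝ} (ha : a ≠ 0) (c : ℝ) :
    Tendsto (fun p => p * a / (p * a + c)) atTop (𝓝 1) := by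
  simpa [div_self ha] using tendsto_mul_div_mul_add_const (tendsto_const_nhds (x := a)) ha c

theorem tendsto_comp_sub_comp_of_tendsto_same {α X G : Type*} [TopologicalSpace X]
    [TopologicalSpace G] [AddGroup G] [IsTopologicalAddGroup G] {l : Filter α} {f g : α → X}
    {x : X} {φ : X → G} (hφ : ContinuousAt φ x) (hf : Tendsto f l (𝓝 x))
    (hg : Tendsto g l (𝓝 x)) :
    Tendsto (fun a => φ (f a) - φ (g a)) l (𝓝 0) := by
  simpa using (hφ.tendsto.comp hf).sub (hφ.tendsto.comp hg)

theorem stmt_10_general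
    (K M : ℕ)
    (β : Fin K → ℝ) (ρ Φ2 σ2 ρRF σRF2 τ T : ℝ)
    (hβ : ∀ k, 0 < β k) (hρ : 0 < ρ) (hΦ2 : 0 < Φ2)
    (hρRF : 0 < ρRF) (hτ : 0 < τ)
    (μ μRF : ℝ → Fin K → ℝ)
    (hμ : ∀ p k, μ p k = ρ * τ * p * β k * Φ2 / (ρ * τ * p * β k * Φ2 + σ2))
    (hμRF : ∀ p k, μRF p k = ρRF * τ * p * β k / (ρRF * τ * p * β k + σRF2))
    (S SRF ΔR : ℝ → ℝ) (k : Fin K)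
    (hS : ∀ p, S p = (M : ℝ) * p * β k * μ p k / ((∑ k', p * β k') + σ2 / (ρ * Φ2)))
    (hSRF : ∀ p, SRF p = (M : ℝ) * p * β k * μRF p k / ((∑ k', p * β k') + σRF2 / ρRF))
    (hΔR : ∀ p, ΔR p = ((T - τ) / T) * (Real.logb 2 (1 + S p) - Real.logb 2 (1 + SRF p))) :
    Tendsto ΔR atTop (nhds 0) := by
  have hβk := hβ k
  have hB : 0 < ∑ k', β k' := sum_pos (fun i _ => hβ i) ⟨k, mem_univ k⟩
  have hμ1 : Tendsto (fun p => μ p k) atTop (𝓝 1) :=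
    (tendsto_mul_div_mul_add_const_self (by positivity : ρ * τ * β k * Φ2 ≠ 0) σ2).congr
      fun p => by rw [hμ]; ring
  have hμRF1 : Tendsto (fun p => μRF p k) atTop (𝓝 1) :=
    (tendsto_mul_div_mul_add_const_self (by positivity : ρRF * τ * β k ≠ 0) σRF2).congr
      fun p => by rw [hμRF]; ring
  set L := (M : ℝ) * β k / ∑ k', β k'
  have hSINR : ∀ (ν : ℝ → ℝ) (c : ℝ), Tendsto ν atTop (𝓝 1) →
      Tendsto (fun p => (M : ℝ) * p * β k * ν p / ((∑ k', p * β k') + c)) atTop (𝓝 L) :=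
    fun ν c hν => by
      simpa using (tendsto_mul_div_mul_add_const (hν.const_mul ((M : ℝ) * β k)) hB.ne' c).congr
        fun p => by rw [← mul_sum]; ring
  have hL : 1 + L ≠ 0 := by positivity
  have hlog := tendsto_comp_sub_comp_of_tendsto_same
    ((Real.continuousAt_logb (b := 2) hL).comp (continuousAt_const.add continuousAt_id))
    ((hSINR _ _ hμ1).congr fun p => (hS p).symm) ((hSINR _ _ hμRF1).congr fun p => (hSRF p).symm)
  simpa [← hΔR] using hlog.const_mul ((T - τ) / T)

/-- High-power regime, Rayleigh fading, MRC: the achievable-rate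
difference between the atomic and RF receivers vanishes as `p → ∞`. -/
theorem stmt_10
    (K M : ℕ) (hK : 1 ≤ K) (hM : 1 ≤ M)
    (β : Fin K → ℝ) (ρ Φ2 σ2 ρRF σRF2 τ T : ℝ)
    (hβ : ∀ k, 0 < β k) (hρ : 0 < ρ) (hΦ2 : 0 < Φ2) (hσ2 : 0 < σ2)
    (hρRF : 0 < ρRF) (hσRF2 : 0 < σRF2) (hτ : 0 < τ) (hT : τ < T)
    (μ μRF : ℝ → Fin K → ℝ)
    (hμ : ∀ p k, μ p k = ρ * τ * p * β k * Φ2 / (ρ * τ * p * β k * Φ2 + σ2))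
    (hμRF : ∀ p k, μRF p k = ρRF * τ * p * β k / (ρRF * τ * p * β k + σRF2))
    (S SRF ΔR : ℝ → ℝ) (k : Fin K)
    (hS : ∀ p, S p = (M : ℝ) * p * β k * μ p k / ((∑ k', p * β k') + σ2 / (ρ * Φ2)))
    (hSRF : ∀ p, SRF p = (M : ℝ) * p * β k * μRF p k / ((∑ k', p * β k') + σRF2 / ρRF))
    (hΔR : ∀ p, ΔR p = ((T - τ) / T) * (Real.logb 2 (1 + S p) - Real.logb 2 (1 + SRF p))) :
    Tendsto ΔR atTop (nhds 0) :=
  stmt_10_general K M β ρ Φ2 σ2 ρRF σRF2 τ T hβ hρ hΦ2 hρRF hτ μ μRF hμ hμRF S SRF ΔR k hS hSRF hΔR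
end

section
/- (High-power regime, Rayleigh, ZF: constant gain log₂ κ.) With equal pilot and data power p^d_k = p^p_k = p for all users, define for each p > 0 the Rayleigh ZF SINRs SINR^ZF(p) = (M−K) p β_k μ_k(p) / ( Σ_{k'} p β_{k'}(1 − μ_{k'}(p)) + σ²/(ρ|Φ|²) ) with μ_k(p) = ρ τ p β_k |Φ|²/(ρ τ p β_k |Φ|² + σ²) for the atomic receiver, and SINR_RF^ZF(p) defined analogously with (ρ_RF, 1, σ_RF²) in place of (ρ, |Φ|², σ²). Then the achievable-rate difference ΔR(p) = ((T−τ)/T)[ log₂(1 + SINR^ZF(p)) − log₂(1 + SINR_RF^ZF(p)) ] satisfies lim_{p → ∞} ΔR(p) = ((T−τ)/T) log₂ κ, where κ = (ρ|Φ|²/σ²)/(ρ_RF/σ_RF²). -/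
open Finset Filter Topology

/-!
Both SINRs grow linearly in `p`: the estimation error `p β_k (1 - μ_k(p))` of each user tends to
`σ²/(ρ|Φ|² τ)`, so the ZF denominator tends to `(σ²/(ρ|Φ|²)) (K/τ + 1)` while the numerator is
asymptotically `(M - K) p β_k`. Hence `(1 + SINR^ZF(p)) / (1 + SINR_RF^ZF(p))` tends to the ratio of
the two limiting denominators, which is `κ` because the common factor `K/τ + 1` cancels.
-/

lemma tendsto_mul_div_mul_add_atTop {a : ℝ} (ha : 0 < a) (b : ℝ) :
    Tendsto (fun p => a * p / (a * p + b)) atTop (𝓝 1) := by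
  have h : Tendsto (fun p : ℝ => a / (a + b / p)) atTop (𝓝 (a / (a + 0))) :=
    tendsto_const_nhds.div (tendsto_const_nhds.add (tendsto_const_nhds.div_atTop tendsto_id))
      (by simpa using ha.ne')
  rw [add_zero, div_self ha.ne'] at h
  refine h.congr' ?_
  filter_upwards [eventually_ne_atTop 0] with p hp
  rw [← mul_div_mul_right a _ hp, add_mul, div_mul_cancel₀ _ hp, mul_comm]

lemma tendsto_mul_one_sub_mul_div_mul_add_atTop {a : ℝ} (ha : 0 < a) (b : ℝ) :
    Tendsto (fun p => p * (1 - a * p / (a * p + b))) atTop (𝓝 (b / a)) := by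
  have h := (tendsto_mul_div_mul_add_atTop ha b).const_mul (b / a)
  rw [mul_one] at h
  refine h.congr' ?_
  have hpos : ∀ᶠ p in atTop, 0 < a * p + b :=
    (tendsto_atTop_add_const_right _ b (tendsto_id.const_mul_atTop ha)).eventually_gt_atTop 0
  filter_upwards [hpos] with p hp
  field_simp
  ring

theorem tendsto_zfSINR_div_self {K : ℕ} (M : ℝ) (β : Fin K → ℝ) (hβ : ∀ k, 0 < β k)
    {g s τ : ℝ} (hg : 0 < g) (hs : 0 < s) (hτ : 0 < τ) (μ : ℝ → Fin K → ℝ)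
    (hμ : ∀ p k, μ p k = g * τ * p * β k / (g * τ * p * β k + s))
    (S : ℝ → ℝ) (k : Fin K)
    (hS : ∀ p, S p = (M - K) * p * β k * μ p k / ((∑ k', p * β k' * (1 - μ p k')) + s / g)) :
    Tendsto (fun p => S p / p) atTop (𝓝 ((M - K) * β k / (s / g * (K / τ + 1)))) := by
  have hβk := hβ k
  have hμ_lim : Tendsto (fun p => μ p k) atTop (𝓝 1) :=
    (tendsto_mul_div_mul_add_atTop (by positivity : 0 < g * τ * β k) s).congr
      fun p => by rw [hμ]; ring
  have herr_lim : ∀ k', Tendsto (fun p => p * β k' * (1 - μ p k')) atTop (𝓝 (s / (g * τ))) := by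
    intro k'
    have hβk' := hβ k'
    have h := (tendsto_mul_one_sub_mul_div_mul_add_atTop
      (by positivity : 0 < g * τ * β k') s).const_mul (β k')
    rw [show β k' * (s / (g * τ * β k')) = s / (g * τ) by field_simp] at h
    exact h.congr fun p => by rw [hμ]; ring
  have hden_lim : Tendsto (fun p => (∑ k', p * β k' * (1 - μ p k')) + s / g) atTop
      (𝓝 (s / g * (K / τ + 1))) := by
    have h := (tendsto_finsetSum univ fun k' _ => herr_lim k').add_const (s / g)
    rw [sum_const, card_univ, Fintype.card_fin, nsmul_eq_mul,
      show (K : ℝ) * (s / (g * τ)) + s / g = s / g * (K / τ + 1) by field_simp] at h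
    exact h
  have hnum_lim : Tendsto (fun p => (M - K) * β k * μ p k) atTop (𝓝 ((M - K) * β k)) := by
    simpa using hμ_lim.const_mul ((M - K) * β k)
  refine (hnum_lim.div hden_lim (by positivity)).congr' ?_
  filter_upwards [eventually_ne_atTop 0] with p hp
  rw [Pi.div_apply, hS]
  field_simp

theorem tendsto_logb_one_add_sub_logb_one_add (b : ℝ) {f g : ℝ → ℝ} {x y : ℝ}
    (hx : 0 < x) (hy : 0 < y) (hf : Tendsto (fun p => f p / p) atTop (𝓝 x))
    (hg : Tendsto (fun p => g p / p) atTop (𝓝 y)) :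
    Tendsto (fun p => Real.logb b (1 + f p) - Real.logb b (1 + g p)) atTop
      (𝓝 (Real.logb b (x / y))) := by
  have hinv : Tendsto (fun p : ℝ => p⁻¹) atTop (𝓝 0) := tendsto_inv_atTop_zero
  have hratio : Tendsto (fun p => (p⁻¹ + f p / p) / (p⁻¹ + g p / p)) atTop
      (𝓝 ((0 + x) / (0 + y))) :=
    (hinv.add hf).div (hinv.add hg) (by simpa using hy.ne')
  rw [zero_add, zero_add] at hratio
  refine ((Real.continuousAt_logb (div_pos hx hy).ne').tendsto.comp hratio).congr' ?_
  filter_upwards [eventually_gt_atTop 0, hf.eventually (eventually_gt_nhds hx),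
    hg.eventually (eventually_gt_nhds hy)] with p hp hfp hgp
  have hf_pos : 0 < f p := by simpa [hp] using mul_pos hfp hp
  have hg_pos : 0 < g p := by simpa [hp] using mul_pos hgp hp
  rw [Function.comp_apply, ← Real.logb_div (by positivity) (by positivity)]
  congr 1
  field_simp

theorem stmt_11_general
    (K M : ℕ) (hMK : K < M)
    (β : Fin K → ℝ) (ρ Φ2 σ2 ρRF σRF2 τ T κ : ℝ)
    (hβ : ∀ k, 0 < β k) (hρ : 0 < ρ) (hΦ2 : 0 < Φ2) (hσ2 : 0 < σ2)
    (hρRF : 0 < ρRF) (hσRF2 : 0 < σRF2) (hτ : 0 < τ)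
    (hκ : κ = (ρ * Φ2 / σ2) / (ρRF / σRF2))
    (μ μRF : ℝ → Fin K → ℝ)
    (hμ : ∀ p k, μ p k = ρ * τ * p * β k * Φ2 / (ρ * τ * p * β k * Φ2 + σ2))
    (hμRF : ∀ p k, μRF p k = ρRF * τ * p * β k / (ρRF * τ * p * β k + σRF2))
    (S SRF ΔR : ℝ → ℝ) (k : Fin K)
    (hS : ∀ p, S p = ((M : ℝ) - K) * p * β k * μ p k /
        ((∑ k', p * β k' * (1 - μ p k')) + σ2 / (ρ * Φ2)))
    (hSRF : ∀ p, SRF p = ((M : ℝ) - K) * p * β k * μRF p k /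
        ((∑ k', p * β k' * (1 - μRF p k')) + σRF2 / ρRF))
    (hΔR : ∀ p, ΔR p = ((T - τ) / T) * (Real.logb 2 (1 + S p) - Real.logb 2 (1 + SRF p))) :
    Tendsto ΔR atTop (nhds (((T - τ) / T) * Real.logb 2 κ)) := by
  have hMK' : (0 : ℝ) < M - K := sub_pos.mpr (by exact_mod_cast hMK)
  have hβk := hβ k
  have hS_lim := tendsto_zfSINR_div_self (M : ℝ) β hβ (mul_pos hρ hΦ2) hσ2 hτ μ
    (fun p k' => by rw [hμ]; ring) S k hS
  have hSRF_lim := tendsto_zfSINR_div_self (M : ℝ) β hβ hρRF hσRF2 hτ μRF hμRF SRF k hSRF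
  have hgap := tendsto_logb_one_add_sub_logb_one_add 2 (by positivity) (by positivity)
    hS_lim hSRF_lim
  rw [show ((M : ℝ) - K) * β k / (σ2 / (ρ * Φ2) * (K / τ + 1)) /
      (((M : ℝ) - K) * β k / (σRF2 / ρRF * (K / τ + 1))) = κ by
    rw [hκ]; field_simp] at hgap
  exact (hgap.const_mul _).congr fun p => (hΔR p).symm

/-- High-power regime, Rayleigh fading, ZF: the achievable-rate
difference between the atomic and RF receivers tends to `((T−τ)/T) log₂ κ`, where
`κ = (ρ|Φ|²/σ²)/(ρ_RF/σ_RF²)`. -/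
theorem stmt_11
    (K M : ℕ) (hK : 1 ≤ K) (hMK : K < M)
    (β : Fin K → ℝ) (ρ Φ2 σ2 ρRF σRF2 τ T κ : ℝ)
    (hβ : ∀ k, 0 < β k) (hρ : 0 < ρ) (hΦ2 : 0 < Φ2) (hσ2 : 0 < σ2)
    (hρRF : 0 < ρRF) (hσRF2 : 0 < σRF2) (hτ : 0 < τ) (hT : τ < T)
    (hκ : κ = (ρ * Φ2 / σ2) / (ρRF / σRF2))
    (μ μRF : ℝ → Fin K → ℝ)
    (hμ : ∀ p k, μ p k = ρ * τ * p * β k * Φ2 / (ρ * τ * p * β k * Φ2 + σ2))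
    (hμRF : ∀ p k, μRF p k = ρRF * τ * p * β k / (ρRF * τ * p * β k + σRF2))
    (S SRF ΔR : ℝ → ℝ) (k : Fin K)
    (hS : ∀ p, S p = ((M : ℝ) - K) * p * β k * μ p k /
        ((∑ k', p * β k' * (1 - μ p k')) + σ2 / (ρ * Φ2)))
    (hSRF : ∀ p, SRF p = ((M : ℝ) - K) * p * β k * μRF p k /
        ((∑ k', p * β k' * (1 - μRF p k')) + σRF2 / ρRF))
    (hΔR : ∀ p, ΔR p = ((T - τ) / T) * (Real.logb 2 (1 + S p) - Real.logb 2 (1 + SRF p))) :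
    Tendsto ΔR atTop (nhds (((T - τ) / T) * Real.logb 2 κ)) :=
  stmt_11_general K M hMK β ρ Φ2 σ2 ρRF σRF2 τ T κ hβ hρ hΦ2 hσ2 hρRF hσRF2 hτ hκ μ μRF hμ hμRF S
    SRF ΔR k hS hSRF hΔR
end

section
/- (Squaring effect, Rayleigh, MRC.) With equal pilot and data power p^d_k = p^p_k = p for all users, define the Rayleigh MRC SINRs SINR^MRC(p) = M p β_k μ_k(p) / ( Σ_{k'} p β_{k'} + σ²/(ρ|Φ|²) ) with μ_k(p) = ρ τ p β_k |Φ|²/(ρ τ p β_k |Φ|² + σ²) for the atomic receiver, and SINR_RF^MRC(p) analogously with (ρ_RF, 1, σ_RF²). Then lim_{p → 0⁺} SINR^MRC(p) / SINR_RF^MRC(p) = κ², where κ = (ρ|Φ|²/σ²)/(ρ_RF/σ_RF²); i.e., in the low-power regime the SINR gain of the atomic receiver over the RF receiver is the square of the normalized-noise ratio. -/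
open Finset Filter Topology

/-!
Writing `c = ρ|Φ|²/σ²` for the normalized gain of a receiver, its Rayleigh MRC SINR is
`M p β_k · cτpβ_k/(cτpβ_k + 1) / (p Σβ + 1/c) = p² · M τ β_k² c² / ((cτpβ_k + 1)(c p Σβ + 1))`.
One factor `p` comes from the data power and one from the pilot-based channel estimate, so
the SINR vanishes like `M τ β_k² c² p²` as `p → 0`, and the ratio of two such SINRs tends
to the square of the ratio of the normalized gains.
-/

/-- `β` is the user's large-scale fading, `B = Σ β_k'`, and the receiver enters only through its
normalized gain `c = ρ|Φ|²/σ²`. -/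
noncomputable def mrcSinr (M τ β B c p : ℝ) : ℝ :=
  M * p * β * (c * τ * p * β / (c * τ * p * β + 1)) / (p * B + c⁻¹)

section mrcSinr

variable {M τ β B c c' : ℝ}

theorem mrcSinr_eq_sq_mul (hc : c ≠ 0) (p : ℝ) :
    mrcSinr M τ β B c p =
      p ^ 2 * (M * τ * β ^ 2 * c ^ 2 / ((c * τ * p * β + 1) * (c * p * B + 1))) := by
  have hden : p * B + c⁻¹ = (c * p * B + 1) / c := by field_simp
  rw [mrcSinr, hden]
  -- if a denominator vanishes, both sides are `0` by the convention `x / 0 = 0`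
  by_cases h₁ : c * τ * p * β + 1 = 0
  · simp [h₁]
  by_cases h₂ : c * p * B + 1 = 0
  · simp [h₂]
  field_simp

theorem tendsto_mrcSinr_div_sq (hc : c ≠ 0) :
    Tendsto (fun p => mrcSinr M τ β B c p / p ^ 2) (𝓝[≠] 0) (𝓝 (M * τ * β ^ 2 * c ^ 2)) := by
  have hcont : ContinuousAt
      (fun p => M * τ * β ^ 2 * c ^ 2 / ((c * τ * p * β + 1) * (c * p * B + 1))) 0 :=
    ContinuousAt.div (by fun_prop) (by fun_prop) (by simp)
  have hlim := hcont.tendsto.mono_left (nhdsWithin_le_nhds (s := {0}ᶜ))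
  simp only [mul_zero, zero_mul, zero_add, mul_one, div_one] at hlim
  refine hlim.congr' ?_
  filter_upwards [self_mem_nhdsWithin] with p hp
  rw [mrcSinr_eq_sq_mul hc, mul_div_cancel_left₀ _ (pow_ne_zero 2 hp)]

theorem tendsto_mrcSinr_div_mrcSinr (hM : M ≠ 0) (hτ : τ ≠ 0) (hβ : β ≠ 0) (hc : c ≠ 0)
    (hc' : c' ≠ 0) :
    Tendsto (fun p => mrcSinr M τ β B c p / mrcSinr M τ β B c' p) (𝓝[≠] 0)
      (𝓝 ((c / c') ^ 2)) := by
  have hlim := (tendsto_mrcSinr_div_sq (M := M) (τ := τ) (β := β) (B := B) hc).div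
    (tendsto_mrcSinr_div_sq (M := M) (τ := τ) (β := β) (B := B) hc') (by positivity)
  have hval : M * τ * β ^ 2 * c ^ 2 / (M * τ * β ^ 2 * c' ^ 2) = (c / c') ^ 2 := by
    field_simp
  rw [hval] at hlim
  refine hlim.congr' ?_
  filter_upwards [self_mem_nhdsWithin] with p hp
  exact div_div_div_cancel_right₀ (pow_ne_zero 2 hp) _ _

end mrcSinr

theorem mrcSinr_div_gain_eq {M τ β B a σ2 : ℝ} (hσ2 : σ2 ≠ 0) (p : ℝ) :
    mrcSinr M τ β B (a / σ2) p =
      M * p * β * (a * τ * p * β / (a * τ * p * β + σ2)) / (p * B + σ2 / a) := by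
  have hgain : a / σ2 * τ * p * β / (a / σ2 * τ * p * β + 1) =
      a * τ * p * β / (a * τ * p * β + σ2) := by
    simp only [div_mul_eq_mul_div]
    rw [div_add_one hσ2, div_div_div_cancel_right₀ hσ2]
  rw [mrcSinr, inv_div, hgain]

theorem stmt_12_general
    (K M : ℕ) (hM : 1 ≤ M)
    (β : Fin K → ℝ) (ρ Φ2 σ2 ρRF σRF2 τ κ : ℝ)
    (hβ : ∀ k, 0 < β k) (hρ : 0 < ρ) (hΦ2 : 0 < Φ2) (hσ2 : 0 < σ2)
    (hρRF : 0 < ρRF) (hσRF2 : 0 < σRF2) (hτ : 0 < τ)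
    (hκ : κ = (ρ * Φ2 / σ2) / (ρRF / σRF2))
    (μ μRF : ℝ → Fin K → ℝ)
    (hμ : ∀ p k, μ p k = ρ * τ * p * β k * Φ2 / (ρ * τ * p * β k * Φ2 + σ2))
    (hμRF : ∀ p k, μRF p k = ρRF * τ * p * β k / (ρRF * τ * p * β k + σRF2))
    (S SRF : ℝ → ℝ) (k : Fin K)
    (hS : ∀ p, S p = (M : ℝ) * p * β k * μ p k / ((∑ k', p * β k') + σ2 / (ρ * Φ2)))
    (hSRF : ∀ p, SRF p = (M : ℝ) * p * β k * μRF p k / ((∑ k', p * β k') + σRF2 / ρRF)) :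
    Tendsto (fun p => S p / SRF p) (nhdsWithin 0 (Set.Ioi 0)) (nhds (κ ^ 2)) := by
  have hS_eq : S = mrcSinr M τ (β k) (∑ k', β k') (ρ * Φ2 / σ2) := by
    funext p
    rw [hS, hμ, mrcSinr_div_gain_eq hσ2.ne', ← mul_sum]
    ring_nf
  have hSRF_eq : SRF = mrcSinr M τ (β k) (∑ k', β k') (ρRF / σRF2) := by
    funext p
    rw [hSRF, hμRF, mrcSinr_div_gain_eq hσRF2.ne', ← mul_sum]
  rw [hS_eq, hSRF_eq, hκ]
  refine (tendsto_mrcSinr_div_mrcSinr ?_ hτ.ne' (hβ k).ne' ?_ ?_).mono_left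
    (nhdsWithin_mono _ fun p (hp : 0 < p) => hp.ne')
  · exact_mod_cast (Nat.one_le_iff_ne_zero.mp hM)
  all_goals positivity

/-- Squaring effect, Rayleigh fading, MRC: in the low-power regime
the SINR gain of the atomic receiver over the RF receiver tends to `κ²`, where
`κ = (ρ|Φ|²/σ²)/(ρ_RF/σ_RF²)`. -/
theorem stmt_12
    (K M : ℕ) (hK : 1 ≤ K) (hM : 1 ≤ M)
    (β : Fin K → ℝ) (ρ Φ2 σ2 ρRF σRF2 τ κ : ℝ)
    (hβ : ∀ k, 0 < β k) (hρ : 0 < ρ) (hΦ2 : 0 < Φ2) (hσ2 : 0 < σ2)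
    (hρRF : 0 < ρRF) (hσRF2 : 0 < σRF2) (hτ : 0 < τ)
    (hκ : κ = (ρ * Φ2 / σ2) / (ρRF / σRF2))
    (μ μRF : ℝ → Fin K → ℝ)
    (hμ : ∀ p k, μ p k = ρ * τ * p * β k * Φ2 / (ρ * τ * p * β k * Φ2 + σ2))
    (hμRF : ∀ p k, μRF p k = ρRF * τ * p * β k / (ρRF * τ * p * β k + σRF2))
    (S SRF : ℝ → ℝ) (k : Fin K)
    (hS : ∀ p, S p = (M : ℝ) * p * β k * μ p k / ((∑ k', p * β k') + σ2 / (ρ * Φ2)))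
    (hSRF : ∀ p, SRF p = (M : ℝ) * p * β k * μRF p k / ((∑ k', p * β k') + σRF2 / ρRF)) :
    Tendsto (fun p => S p / SRF p) (nhdsWithin 0 (Set.Ioi 0)) (nhds (κ ^ 2)) :=
  stmt_12_general K M hM β ρ Φ2 σ2 ρRF σRF2 τ κ hβ hρ hΦ2 hσ2 hρRF hσRF2 hτ hκ μ μRF hμ hμRF S SRF k
    hS hSRF
end

section
/- (Squaring effect, Rayleigh, ZF.) With equal pilot and data power p^d_k = p^p_k = p for all users, define the Rayleigh ZF SINRs SINR^ZF(p) = (M−K) p β_k μ_k(p) / ( Σ_{k'} p β_{k'}(1 − μ_{k'}(p)) + σ²/(ρ|Φ|²) ) with μ_k(p) = ρ τ p β_k |Φ|²/(ρ τ p β_k |Φ|² + σ²) for the atomic receiver, and SINR_RF^ZF(p) analogously with (ρ_RF, 1, σ_RF²). Then lim_{p → 0⁺} SINR^ZF(p) / SINR_RF^ZF(p) = κ², where κ = (ρ|Φ|²/σ²)/(ρ_RF/σ_RF²). -/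
open Finset Filter Topology

/-!
Both SINRs are quadratic in the transmit power `p` at low power: one factor `p` is the data power,
the other comes from the channel-estimation quality `μ_k(p) ≈ τ p β_k c`, where `c` is the
receiver's normalized SNR. Meanwhile the interference-plus-noise term tends to the noise level
`1 / c`. Hence `SINR(p) ≈ (M - K) τ β_k² c² p²`, and the ratio of two receivers tends to the square
of the ratio of their normalized SNRs, which is `κ²`.
-/

namespace ZF

variable {ι : Type*} (β : ι → ℝ) (τ c G : ℝ)

/- A receiver enters only through its normalized SNR `c` (`ρ|Φ|²/σ²` for the atomic receiver,
`ρ_RF/σ_RF²` for the RF one); `G` is the array gain `M - K`. -/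
noncomputable def mmseQuality (p : ℝ) (i : ι) : ℝ :=
  τ * p * β i * c / (τ * p * β i * c + 1)

lemma mmseQuality_div {σ2 : ℝ} (hσ2 : σ2 ≠ 0) (g p : ℝ) (i : ι) :
    mmseQuality β τ (g / σ2) p i = g * τ * p * β i / (g * τ * p * β i + σ2) := by
  rw [mmseQuality, show τ * p * β i * (g / σ2) = g * τ * p * β i / σ2 by ring,
    div_add_one hσ2, div_div_div_cancel_right₀ hσ2]

variable [Fintype ι]

noncomputable def sinr (k : ι) (p : ℝ) : ℝ :=
  G * p * β k * mmseQuality β τ c p k /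
    (∑ i, p * β i * (1 - mmseQuality β τ c p i) + 1 / c)

lemma tendsto_sinr_div_sq (hc : c ≠ 0) (k : ι) :
    Tendsto (fun p => sinr β τ c G k p / p ^ 2) (𝓝[≠] 0) (𝓝 (G * τ * β k ^ 2 * c ^ 2)) := by
  set h : ℝ → ℝ := fun p => G * β k * (τ * β k * c / (τ * p * β k * c + 1)) /
    (∑ i, p * β i * (1 - mmseQuality β τ c p i) + 1 / c)
  have hsinr : ∀ p, sinr β τ c G k p = p ^ 2 * h p := fun p => by
    simp only [sinr, mmseQuality, h]; ring
  have hcont : ContinuousAt h 0 := by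
    simp only [h, mmseQuality]
    fun_prop (disch := simp [hc])
  have h0 : h 0 = G * τ * β k ^ 2 * c ^ 2 := by
    simp only [h, zero_mul, mul_zero, zero_add, sum_const_zero, div_one, one_div, div_inv_eq_mul]
    ring
  refine (h0 ▸ hcont.tendsto.mono_left nhdsWithin_le_nhds).congr' ?_
  filter_upwards [self_mem_nhdsWithin] with p hp
  rw [hsinr, mul_div_cancel_left₀ _ (pow_ne_zero 2 hp)]

lemma tendsto_sinr_div_sinr {c' : ℝ} (hG : G ≠ 0) (hτ : τ ≠ 0) (hc : c ≠ 0) (hc' : c' ≠ 0)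
    {k : ι} (hβk : β k ≠ 0) :
    Tendsto (fun p => sinr β τ c G k p / sinr β τ c' G k p) (𝓝[≠] 0) (𝓝 ((c / c') ^ 2)) := by
  have hlim := (tendsto_sinr_div_sq β τ c G hc k).div (tendsto_sinr_div_sq β τ c' G hc' k)
    (by positivity)
  rw [show G * τ * β k ^ 2 * c ^ 2 / (G * τ * β k ^ 2 * c' ^ 2) = (c / c') ^ 2 by
    field_simp] at hlim
  refine hlim.congr' ?_
  filter_upwards [self_mem_nhdsWithin] with p hp
  exact div_div_div_cancel_right₀ (pow_ne_zero 2 hp) _ _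

end ZF

theorem stmt_13_general
    (K M : ℕ) (hMK : K < M)
    (β : Fin K → ℝ) (ρ Φ2 σ2 ρRF σRF2 τ κ : ℝ)
    (hβ : ∀ k, 0 < β k) (hρ : 0 < ρ) (hΦ2 : 0 < Φ2) (hσ2 : 0 < σ2)
    (hρRF : 0 < ρRF) (hσRF2 : 0 < σRF2) (hτ : 0 < τ)
    (hκ : κ = (ρ * Φ2 / σ2) / (ρRF / σRF2))
    (μ μRF : ℝ → Fin K → ℝ)
    (hμ : ∀ p k, μ p k = ρ * τ * p * β k * Φ2 / (ρ * τ * p * β k * Φ2 + σ2))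
    (hμRF : ∀ p k, μRF p k = ρRF * τ * p * β k / (ρRF * τ * p * β k + σRF2))
    (S SRF : ℝ → ℝ) (k : Fin K)
    (hS : ∀ p, S p = ((M : ℝ) - K) * p * β k * μ p k /
        ((∑ k', p * β k' * (1 - μ p k')) + σ2 / (ρ * Φ2)))
    (hSRF : ∀ p, SRF p = ((M : ℝ) - K) * p * β k * μRF p k /
        ((∑ k', p * β k' * (1 - μRF p k')) + σRF2 / ρRF)) :
    Tendsto (fun p => S p / SRF p) (nhdsWithin 0 (Set.Ioi 0)) (nhds (κ ^ 2)) := by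
  have hμ' : μ = ZF.mmseQuality β τ (ρ * Φ2 / σ2) := by
    ext p i; rw [hμ, ZF.mmseQuality_div β τ hσ2.ne']; ring
  have hμRF' : μRF = ZF.mmseQuality β τ (ρRF / σRF2) := by
    ext p i; rw [hμRF, ZF.mmseQuality_div β τ hσRF2.ne']
  have hS' : S = ZF.sinr β τ (ρ * Φ2 / σ2) (M - K) k := by
    ext p; rw [hS, ZF.sinr, hμ', one_div_div]
  have hSRF' : SRF = ZF.sinr β τ (ρRF / σRF2) (M - K) k := by
    ext p; rw [hSRF, ZF.sinr, hμRF', one_div_div]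
  have hG : (M : ℝ) - K ≠ 0 := sub_ne_zero.2 (by exact_mod_cast hMK.ne')
  rw [hS', hSRF', hκ]
  exact (ZF.tendsto_sinr_div_sinr β τ _ _ hG hτ.ne' (by positivity) (by positivity)
    (hβ k).ne').mono_left (nhdsGT_le_nhdsNE 0)

/-- Squaring effect, Rayleigh fading, ZF: in the low-power regime
the SINR gain of the atomic receiver over the RF receiver tends to `κ²`, where
`κ = (ρ|Φ|²/σ²)/(ρ_RF/σ_RF²)`. -/
theorem stmt_13
    (K M : ℕ) (hK : 1 ≤ K) (hMK : K < M)
    (β : Fin K → ℝ) (ρ Φ2 σ2 ρRF σRF2 τ κ : ℝ)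
    (hβ : ∀ k, 0 < β k) (hρ : 0 < ρ) (hΦ2 : 0 < Φ2) (hσ2 : 0 < σ2)
    (hρRF : 0 < ρRF) (hσRF2 : 0 < σRF2) (hτ : 0 < τ)
    (hκ : κ = (ρ * Φ2 / σ2) / (ρRF / σRF2))
    (μ μRF : ℝ → Fin K → ℝ)
    (hμ : ∀ p k, μ p k = ρ * τ * p * β k * Φ2 / (ρ * τ * p * β k * Φ2 + σ2))
    (hμRF : ∀ p k, μRF p k = ρRF * τ * p * β k / (ρRF * τ * p * β k + σRF2))
    (S SRF : ℝ → ℝ) (k : Fin K)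
    (hS : ∀ p, S p = ((M : ℝ) - K) * p * β k * μ p k /
        ((∑ k', p * β k' * (1 - μ p k')) + σ2 / (ρ * Φ2)))
    (hSRF : ∀ p, SRF p = ((M : ℝ) - K) * p * β k * μRF p k /
        ((∑ k', p * β k' * (1 - μRF p k')) + σRF2 / ρRF)) :
    Tendsto (fun p => S p / SRF p) (nhdsWithin 0 (Set.Ioi 0)) (nhds (κ ^ 2)) :=
  stmt_13_general K M hMK β ρ Φ2 σ2 ρRF σRF2 τ κ hβ hρ hΦ2 hσ2 hρRF hσRF2 hτ hκ μ μRF hμ hμRF S SRF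
    k hS hSRF
end

section
/- (Exact transmit-power reduction by factor κ, Rayleigh.) Let κ = (ρ|Φ|²/σ²)/(ρ_RF/σ_RF²). For any per-user data powers p^d_k > 0 and pilot powers p^p_k > 0, the Rayleigh MRC and ZF SINRs of the atomic receiver evaluated at the reduced powers (p^d_k/κ, p^p_k/κ) coincide exactly with those of the conventional RF receiver at powers (p^d_k, p^p_k): M (p^d_k/κ) β_k μ_k(p^p_k/κ; ρ,|Φ|²,σ²) / ( Σ_{k'} (p^d_{k'}/κ) β_{k'} + σ²/(ρ|Φ|²) ) = M p^d_k β_k μ_{k,RF}(p^p_k) / ( Σ_{k'} p^d_{k'} β_{k'} + σ_RF²/ρ_RF ), and (M−K)(p^d_k/κ) β_k μ_k(p^p_k/κ)/( Σ_{k'} (p^d_{k'}/κ) β_{k'}(1−μ_{k'}(p^p_{k'}/κ)) + σ²/(ρ|Φ|²) ) = (M−K) p^d_k β_k μ_{k,RF}(p^p_k)/( Σ_{k'} p^d_{k'} β_{k'}(1−μ_{k',RF}(p^p_{k'})) + σ_RF²/ρ_RF ), where μ_k(q; ρ,|Φ|²,σ²) = ρ τ q β_k |Φ|²/(ρ τ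 q β_k |Φ|² + σ²) and μ_{k,RF}(q) = ρ_RF τ q β_k/(ρ_RF τ q β_k + σ_RF²). -/
open Finset

/-!
Dividing every transmit power by `κ` divides the received signal, the interference and the
normalized noise `σ²/(ρ|Φ|²) = (σ_RF²/ρ_RF)/κ` of the atomic receiver by the same factor, so the
SINR ratios agree with those of the RF receiver. For the pilots, the MMSE quality
`a t / (a t + s)` depends only on the effective SNR `a / s`, and the reduced pilot power turns
`ρ|Φ|²/σ²` into exactly `ρ_RF/σ_RF²`.
-/

lemma mul_div_mul_add_eq_of_div_eq {a s a' s' : ℝ} (t : ℝ) (hs : s ≠ 0) (hs' : s' ≠ 0)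
    (h : a / s = a' / s') : a * t / (a * t + s) = a' * t / (a' * t + s') := by
  have normalize : ∀ {b r : ℝ}, r ≠ 0 → b * t / (b * t + r) = b / r * t / (b / r * t + 1) :=
    fun {b r} hr => by rw [← div_div_div_cancel_right₀ hr]; field_simp
  rw [normalize hs, normalize hs', h]

lemma div_div_sum_div_add_div {ι : Type*} (s : Finset ι) (f : ι → ℝ) {c : ℝ} (hc : c ≠ 0)
    (A N : ℝ) : A / c / (∑ i ∈ s, f i / c + N / c) = A / (∑ i ∈ s, f i + N) := by
  rw [← sum_div, ← add_div, div_div_div_cancel_right₀ hc]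

theorem stmt_14_general
    (K M : ℕ)
    (β pd pp : Fin K → ℝ) (ρ Φ2 σ2 ρRF σRF2 τ κ : ℝ)
    (hρ : 0 < ρ) (hΦ2 : 0 < Φ2) (hσ2 : 0 < σ2)
    (hρRF : 0 < ρRF) (hσRF2 : 0 < σRF2)
    (hκ : κ = (ρ * Φ2 / σ2) / (ρRF / σRF2))
    (μ μRF : ℝ → Fin K → ℝ)
    (hμ : ∀ q k, μ q k = ρ * τ * q * β k * Φ2 / (ρ * τ * q * β k * Φ2 + σ2))
    (hμRF : ∀ q k, μRF q k = ρRF * τ * q * β k / (ρRF * τ * q * β k + σRF2))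
    (k : Fin K) :
    ((M : ℝ) * (pd k / κ) * β k * μ (pp k / κ) k /
        ((∑ k', (pd k' / κ) * β k') + σ2 / (ρ * Φ2))
      = (M : ℝ) * pd k * β k * μRF (pp k) k /
        ((∑ k', pd k' * β k') + σRF2 / ρRF))
    ∧ (((M : ℝ) - K) * (pd k / κ) * β k * μ (pp k / κ) k /
        ((∑ k', (pd k' / κ) * β k' * (1 - μ (pp k' / κ) k')) + σ2 / (ρ * Φ2))
      = ((M : ℝ) - K) * pd k * β k * μRF (pp k) k /
        ((∑ k', pd k' * β k' * (1 - μRF (pp k') k')) + σRF2 / ρRF)) := by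
  have hκ0 : κ ≠ 0 := by rw [hκ]; positivity
  have pilot_snr : ρ * Φ2 / κ / σ2 = ρRF / σRF2 := by subst hκ; field_simp
  have noise : σ2 / (ρ * Φ2) = σRF2 / ρRF / κ := by subst hκ; field_simp
  have quality : ∀ k', μ (pp k' / κ) k' = μRF (pp k') k' := fun k' => by
    rw [hμ, hμRF]
    convert mul_div_mul_add_eq_of_div_eq (τ * pp k' * β k') hσ2.ne' hσRF2.ne' pilot_snr
      using 2 <;> ring
  simp only [quality, noise, mul_div_assoc', div_mul_eq_mul_div]
  exact ⟨div_div_sum_div_add_div _ _ hκ0 _ _, div_div_sum_div_add_div _ _ hκ0 _ _⟩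

/-- Exact transmit-power reduction by the factor
`κ = (ρ|Φ|²/σ²)/(ρ_RF/σ_RF²)` under Rayleigh fading: the atomic receiver's MRC and ZF
SINRs at powers `(p^d_k/κ, p^p_k/κ)` equal the RF receiver's SINRs at `(p^d_k, p^p_k)`. -/
theorem stmt_14
    (K M : ℕ) (hK : 1 ≤ K) (hMK : K < M)
    (β pd pp : Fin K → ℝ) (ρ Φ2 σ2 ρRF σRF2 τ κ : ℝ)
    (hβ : ∀ k, 0 < β k) (hpd : ∀ k, 0 < pd k) (hpp : ∀ k, 0 < pp k)
    (hρ : 0 < ρ) (hΦ2 : 0 < Φ2) (hσ2 : 0 < σ2)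
    (hρRF : 0 < ρRF) (hσRF2 : 0 < σRF2) (hτ : 0 < τ)
    (hκ : κ = (ρ * Φ2 / σ2) / (ρRF / σRF2))
    (μ μRF : ℝ → Fin K → ℝ)
    (hμ : ∀ q k, μ q k = ρ * τ * q * β k * Φ2 / (ρ * τ * q * β k * Φ2 + σ2))
    (hμRF : ∀ q k, μRF q k = ρRF * τ * q * β k / (ρRF * τ * q * β k + σRF2))
    (k : Fin K) :
    ((M : ℝ) * (pd k / κ) * β k * μ (pp k / κ) k /
        ((∑ k', (pd k' / κ) * β k') + σ2 / (ρ * Φ2))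
      = (M : ℝ) * pd k * β k * μRF (pp k) k /
        ((∑ k', pd k' * β k') + σRF2 / ρRF))
    ∧ (((M : ℝ) - K) * (pd k / κ) * β k * μ (pp k / κ) k /
        ((∑ k', (pd k' / κ) * β k' * (1 - μ (pp k' / κ) k')) + σ2 / (ρ * Φ2))
      = ((M : ℝ) - K) * pd k * β k * μRF (pp k) k /
        ((∑ k', pd k' * β k' * (1 - μRF (pp k') k')) + σRF2 / ρRF)) :=
  stmt_14_general K M β pd pp ρ Φ2 σ2 ρRF σRF2 τ κ hρ hΦ2 hσ2 hρRF hσRF2 hκ μ μRF hμ hμRF k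
end

section
/- (Exact range extension by factor √κ, Rayleigh.) Let κ = (ρ|Φ|²/σ²)/(ρ_RF/σ_RF²). For any data powers p^d_k > 0, pilot powers p^p_k > 0, and large-scale coefficients β_k > 0, the Rayleigh MRC and ZF SINRs of the atomic receiver evaluated with all large-scale coefficients scaled down to β_k/κ coincide exactly with those of the conventional RF receiver with coefficients β_k. In particular, since free-space path loss scales as β(d) ∝ 1/d², at equal transmit powers the atomic receiver achieves the RF receiver's SINR at a propagation distance larger by the factor √κ. -/
open Finset

/-!
The atomic receiver enters the Rayleigh SINRs only through its normalized SNR `ρ|Φ|²/σ²`,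
which is `κ` times that of the RF receiver. Dividing every `β_k` by `κ` therefore leaves each
pilot quality `μ_k` unchanged, and both SINRs are quotients whose numerator and denominator
are then the RF ones divided by `κ`. With `β(d) = c/d²`, dividing `β` by `κ` is the same as
multiplying `d` by `√κ`.
-/

section SINR

variable {ι : Type*} [Fintype ι]

noncomputable def sinrMRC (G : ℝ) (pd β μ : ι → ℝ) (ν : ℝ) (k : ι) : ℝ :=
  G * pd k * β k * μ k / (∑ j, pd j * β j + ν)

noncomputable def sinrZF (G : ℝ) (pd β μ : ι → ℝ) (ν : ℝ) (k : ι) : ℝ :=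
  G * pd k * β k * μ k / (∑ j, pd j * β j * (1 - μ j) + ν)

theorem sinrMRC_div_const (G : ℝ) (pd β μ : ι → ℝ) (ν : ℝ) {κ : ℝ} (hκ : κ ≠ 0) (k : ι) :
    sinrMRC G pd (fun j => β j / κ) μ (ν / κ) k = sinrMRC G pd β μ ν k := by
  have hsum : ∑ j, pd j * (β j / κ) = (∑ j, pd j * β j) / κ := by
    rw [sum_div]
    exact sum_congr rfl fun j _ => by ring
  unfold sinrMRC
  rw [hsum, ← add_div, show G * pd k * (β k / κ) * μ k = G * pd k * β k * μ k / κ by ring,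
    div_div_div_cancel_right₀ hκ]

theorem sinrZF_div_const (G : ℝ) (pd β μ : ι → ℝ) (ν : ℝ) {κ : ℝ} (hκ : κ ≠ 0) (k : ι) :
    sinrZF G pd (fun j => β j / κ) μ (ν / κ) k = sinrZF G pd β μ ν k := by
  have hsum : ∑ j, pd j * (β j / κ) * (1 - μ j) = (∑ j, pd j * β j * (1 - μ j)) / κ := by
    rw [sum_div]
    exact sum_congr rfl fun j _ => by ring
  unfold sinrZF
  rw [hsum, ← add_div, show G * pd k * (β k / κ) * μ k = G * pd k * β k * μ k / κ by ring,
    div_div_div_cancel_right₀ hκ]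

end SINR

section SNRRatio

variable {ρ Φ2 σ2 ρRF σRF2 κ : ℝ}

theorem pilotQuality_div_snrRatio (hσ2 : σ2 ≠ 0) (hσRF2 : σRF2 ≠ 0) (hκ : κ ≠ 0)
    (hrel : κ * σ2 * ρRF = ρ * Φ2 * σRF2) (t p b : ℝ) :
    ρ * t * p * (b / κ) * Φ2 / (ρ * t * p * (b / κ) * Φ2 + σ2)
      = ρRF * t * p * b / (ρRF * t * p * b + σRF2) := by
  have hnum : ρ * t * p * (b / κ) * Φ2 = σ2 / σRF2 * (ρRF * t * p * b) := by
    field_simp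
    linear_combination -(t * p * b) * hrel
  have hden : ρ * t * p * (b / κ) * Φ2 + σ2 = σ2 / σRF2 * (ρRF * t * p * b + σRF2) := by
    rw [hnum]
    field_simp
  rw [hden, hnum, mul_div_mul_left _ _ (div_ne_zero hσ2 hσRF2)]

theorem noise_eq_div_snrRatio (hρ : ρ ≠ 0) (hΦ2 : Φ2 ≠ 0) (hρRF : ρRF ≠ 0) (hκ : κ ≠ 0)
    (hrel : κ * σ2 * ρRF = ρ * Φ2 * σRF2) :
    σ2 / (ρ * Φ2) = σRF2 / ρRF / κ := by
  field_simp
  linear_combination hrel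

end SNRRatio

theorem div_sqrt_mul_sq {κ : ℝ} (hκ : 0 ≤ κ) (c d : ℝ) :
    c / (Real.sqrt κ * d) ^ 2 = c / d ^ 2 / κ := by
  rw [mul_pow, Real.sq_sqrt hκ, div_div, mul_comm]

theorem stmt_15_general
    (K M : ℕ)
    (β pd pp : Fin K → ℝ) (ρ Φ2 σ2 ρRF σRF2 τ κ : ℝ)
    (hρ : 0 < ρ) (hΦ2 : 0 < Φ2) (hσ2 : 0 < σ2)
    (hρRF : 0 < ρRF) (hσRF2 : 0 < σRF2)
    (hκ : κ = (ρ * Φ2 / σ2) / (ρRF / σRF2))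
    (μA μRF : Fin K → ℝ)
    (hμA : ∀ k, μA k = ρ * τ * pp k * (β k / κ) * Φ2
        / (ρ * τ * pp k * (β k / κ) * Φ2 + σ2))
    (hμRF : ∀ k, μRF k = ρRF * τ * pp k * β k / (ρRF * τ * pp k * β k + σRF2))
    (k : Fin K) :
    ((M : ℝ) * pd k * (β k / κ) * μA k /
        ((∑ k', pd k' * (β k' / κ)) + σ2 / (ρ * Φ2))
      = (M : ℝ) * pd k * β k * μRF k / ((∑ k', pd k' * β k') + σRF2 / ρRF))
    ∧ (((M : ℝ) - K) * pd k * (β k / κ) * μA k /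
        ((∑ k', pd k' * (β k' / κ) * (1 - μA k')) + σ2 / (ρ * Φ2))
      = ((M : ℝ) - K) * pd k * β k * μRF k /
        ((∑ k', pd k' * β k' * (1 - μRF k')) + σRF2 / ρRF))
    ∧ (∀ c d : ℝ, 0 < d → c / (Real.sqrt κ * d) ^ 2 = (c / d ^ 2) / κ) := by
  have hκpos : 0 < κ := by rw [hκ]; positivity
  have hrel : κ * σ2 * ρRF = ρ * Φ2 * σRF2 := by rw [hκ]; field_simp
  have hμ : μA = μRF := funext fun j => by
    rw [hμA, hμRF, pilotQuality_div_snrRatio hσ2.ne' hσRF2.ne' hκpos.ne' hrel]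
  have hν := noise_eq_div_snrRatio hρ.ne' hΦ2.ne' hρRF.ne' hκpos.ne' hrel
  refine ⟨?_, ?_, fun c d _ => div_sqrt_mul_sq hκpos.le c d⟩
  · rw [hμ, hν]
    exact sinrMRC_div_const (M : ℝ) pd β μRF (σRF2 / ρRF) hκpos.ne' k
  · rw [hμ, hν]
    exact sinrZF_div_const ((M : ℝ) - K) pd β μRF (σRF2 / ρRF) hκpos.ne' k

/-- Exact range extension by `√κ` under Rayleigh fading: the atomic
receiver's MRC and ZF SINRs with all large-scale coefficients scaled to `β_k/κ`
coincide with the RF receiver's SINRs with coefficients `β_k`; and since free-space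
path loss scales as `β(d) = c/d²`, a distance larger by `√κ` scales `β` by `1/κ`. -/
theorem stmt_15
    (K M : ℕ) (hK : 1 ≤ K) (hMK : K < M)
    (β pd pp : Fin K → ℝ) (ρ Φ2 σ2 ρRF σRF2 τ κ : ℝ)
    (hβ : ∀ k, 0 < β k) (hpd : ∀ k, 0 < pd k) (hpp : ∀ k, 0 < pp k)
    (hρ : 0 < ρ) (hΦ2 : 0 < Φ2) (hσ2 : 0 < σ2)
    (hρRF : 0 < ρRF) (hσRF2 : 0 < σRF2) (hτ : 0 < τ)
    (hκ : κ = (ρ * Φ2 / σ2) / (ρRF / σRF2))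
    (μA μRF : Fin K → ℝ)
    (hμA : ∀ k, μA k = ρ * τ * pp k * (β k / κ) * Φ2
        / (ρ * τ * pp k * (β k / κ) * Φ2 + σ2))
    (hμRF : ∀ k, μRF k = ρRF * τ * pp k * β k / (ρRF * τ * pp k * β k + σRF2))
    (k : Fin K) :
    ((M : ℝ) * pd k * (β k / κ) * μA k /
        ((∑ k', pd k' * (β k' / κ)) + σ2 / (ρ * Φ2))
      = (M : ℝ) * pd k * β k * μRF k / ((∑ k', pd k' * β k') + σRF2 / ρRF))
    ∧ (((M : ℝ) - K) * pd k * (β k / κ) * μA k /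
        ((∑ k', pd k' * (β k' / κ) * (1 - μA k')) + σ2 / (ρ * Φ2))
      = ((M : ℝ) - K) * pd k * β k * μRF k /
        ((∑ k', pd k' * β k' * (1 - μRF k')) + σRF2 / ρRF))
    ∧ (∀ c d : ℝ, 0 < d → c / (Real.sqrt κ * d) ^ 2 = (c / d ^ 2) / κ) :=
  stmt_15_general K M β pd pp ρ Φ2 σ2 ρRF σRF2 τ κ hρ hΦ2 hσ2 hρRF hσRF2 hκ μA μRF hμA hμRF k
end
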